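/- arXiv:1305.0656 — 5 statements merged into one kernel-verified Lean document; each statement's English description precedes it below -/
import Mathlib

section
/- Assume moreover that the sets {t_{n+1} − t_n : n ≥ 1} and {b_n : n ≥ 1} are finite, and set ℓ := 1 + sup_n (t_{n+1} − t_n). Then the decomposition of μ into its pieces is simple in the following sense: for all indices n, m ≥ 1, if μ(t_n + A) = μ(t_m + A) for every Borel set A ⊆ [0, ℓ), then b_n = b_m and t_{n+1} − t_n = t_{m+1} − t_m. -/
open Set MeasureTheory

/-- The atomic measure `μ = Σₙ βₙ δ_{tₙ}` with weights
`βₙ = (√bₙ + 1)/(√bₙ - 1)` associated to a radial metric tree. -/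
noncomputable def treeMeasure (t b : ℕ → ℝ) : Measure ℝ :=
  Measure.sum fun n =>
    ENNReal.ofReal ((Real.sqrt (b n) + 1) / (Real.sqrt (b n) - 1)) • Measure.dirac (t n)

/-! Shifting a singleton `{x}` with `x ∈ [0, ℓ)` by `t n` and by `t m` must give equal masses.
For `x = 0` this compares the weights `βₙ, βₘ`, and `β` is injective on `(1, ∞)`. For `x` the
gap after `t n`, the point `t (n + 1)` carries positive mass, so `t m + x` must be an atom too,
which forces the gap after `t m` to be at most `x`; by symmetry the gaps agree. -/

noncomputable def treeWeight (x : ℝ) : ℝ := (Real.sqrt x + 1) / (Real.sqrt x - 1)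

lemma treeWeight_pos {x : ℝ} (hx : 1 < x) : 0 < treeWeight x := by
  have : 1 < Real.sqrt x := Real.lt_sqrt_of_sq_lt (by simpa using hx)
  exact div_pos (by linarith) (by linarith)

lemma treeWeight_injOn : InjOn treeWeight (Ioi 1) := by
  intro x hx y hy hxy
  have hsx : 1 < Real.sqrt x := Real.lt_sqrt_of_sq_lt (by simpa using hx)
  have hsy : 1 < Real.sqrt y := Real.lt_sqrt_of_sq_lt (by simpa using hy)
  have hsqrt : Real.sqrt x = Real.sqrt y := by
    rw [treeWeight, treeWeight, div_eq_div_iff (by linarith) (by linarith)] at hxy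
    linarith
  rwa [Real.sqrt_inj (zero_le_one.trans hx.le) (zero_le_one.trans hy.le)] at hsqrt

section

variable {t b : ℕ → ℝ}

lemma treeMeasure_singleton_of_injective (ht : Function.Injective t) (k : ℕ) :
    treeMeasure t b {t k} = ENNReal.ofReal (treeWeight (b k)) := by
  rw [treeMeasure, Measure.sum_apply _ (measurableSet_singleton _), tsum_eq_single k]
  · simp [treeWeight]
  · intro n hn
    simp [Measure.dirac_apply' _ (measurableSet_singleton _), ht.ne hn]

lemma treeMeasure_singleton_of_notMem_range {x : ℝ} (hx : x ∉ range t) :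
    treeMeasure t b {x} = 0 := by
  rw [treeMeasure, Measure.sum_apply _ (measurableSet_singleton _)]
  refine ENNReal.tsum_eq_zero.2 fun n => ?_
  have : t n ≠ x := fun h => hx ⟨n, h⟩
  simp [Measure.dirac_apply' _ (measurableSet_singleton x), this]

lemma eq_of_treeMeasure_singleton_eq (ht : Function.Injective t) (hb : ∀ k, 1 < b k)
    {n m : ℕ} (h : treeMeasure t b {t n} = treeMeasure t b {t m}) : b n = b m := by
  rw [treeMeasure_singleton_of_injective ht, treeMeasure_singleton_of_injective ht,
    ENNReal.ofReal_eq_ofReal_iff (treeWeight_pos (hb n)).le (treeWeight_pos (hb m)).le] at h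
  exact treeWeight_injOn (hb n) (hb m) h

lemma gap_le_of_treeMeasure_singleton_eq (ht : StrictMono t) (hb : ∀ k, 1 < b k) {n m : ℕ}
    (h : treeMeasure t b {t n + (t (n + 1) - t n)}
      = treeMeasure t b {t m + (t (n + 1) - t n)}) :
    t (m + 1) - t m ≤ t (n + 1) - t n := by
  by_contra! hlt
  have hatom : treeMeasure t b {t m + (t (n + 1) - t n)} = 0 := by
    refine treeMeasure_singleton_of_notMem_range ?_
    rintro ⟨k, hk⟩
    have hpos : t n < t (n + 1) := ht (Nat.lt_succ_self n)
    exact ht.monotone.ne_of_lt_of_lt_nat m (by linarith) (by linarith) k hk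
  rw [add_sub_cancel, hatom, treeMeasure_singleton_of_injective ht.injective] at h
  exact (ENNReal.ofReal_pos.2 (treeWeight_pos (hb (n + 1)))).ne' h

end

theorem treeMeasure_simple_decomposition_general
    (t b : ℕ → ℝ)
    (ht_mono : StrictMono t)
    (hb : ∃ c > 1, ∀ n, c ≤ b n)
    (hfin_gaps : (Set.range fun n => t (n + 1) - t n).Finite) :
    ∀ n m : ℕ,
      (∀ A : Set ℝ, MeasurableSet A →
          A ⊆ Set.Ico 0 (1 + ⨆ j : ℕ, (t (j + 1) - t j)) →
          treeMeasure t b ((fun y => t n + y) '' A)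
            = treeMeasure t b ((fun y => t m + y) '' A)) →
      b n = b m ∧ t (n + 1) - t n = t (m + 1) - t m := by
  intro n m hA
  obtain ⟨c, hc, hcb⟩ := hb
  have hb1 : ∀ k, 1 < b k := fun k => hc.trans_le (hcb k)
  have hpoint : ∀ x ∈ Ico 0 (1 + ⨆ j : ℕ, (t (j + 1) - t j)),
      treeMeasure t b {t n + x} = treeMeasure t b {t m + x} := fun x hx => by
    simpa only [image_singleton] using
      hA {x} (measurableSet_singleton x) (singleton_subset_iff.2 hx)
  have hgap_mem : ∀ j, t (j + 1) - t j ∈ Ico 0 (1 + ⨆ j : ℕ, (t (j + 1) - t j)) := fun j =>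
    ⟨sub_nonneg.2 (ht_mono.monotone (Nat.le_succ j)),
      by linarith [le_ciSup hfin_gaps.bddAbove j]⟩
  have hzero_mem : (0 : ℝ) ∈ Ico 0 (1 + ⨆ j : ℕ, (t (j + 1) - t j)) :=
    ⟨le_rfl, (hgap_mem 0).1.trans_lt (hgap_mem 0).2⟩
  refine ⟨eq_of_treeMeasure_singleton_eq ht_mono.injective hb1 ?_, le_antisymm ?_ ?_⟩
  · simpa only [add_zero] using hpoint 0 hzero_mem
  · exact gap_le_of_treeMeasure_singleton_eq ht_mono hb1 (hpoint _ (hgap_mem m)).symm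
  · exact gap_le_of_treeMeasure_singleton_eq ht_mono hb1 (hpoint _ (hgap_mem n))

/-- if the sets `{t_{n+1} - t_n}` and `{b_n}` are finite and
`ℓ := 1 + supₙ (t_{n+1} - t_n)`, then the decomposition of `μ` into its pieces is
simple: whenever `μ(t_n + A) = μ(t_m + A)` for every Borel `A ⊆ [0, ℓ)`, one has
`b_n = b_m` and `t_{n+1} - t_n = t_{m+1} - t_m`. -/
theorem treeMeasure_simple_decomposition
    (t b : ℕ → ℝ)
    (ht_pos : ∀ n, 0 < t n) (ht_mono : StrictMono t)
    (hgap : ∃ δ > 0, ∀ n, δ ≤ t (n + 1) - t n)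
    (hb : ∃ c > 1, ∀ n, c ≤ b n)
    (hfin_gaps : (Set.range fun n => t (n + 1) - t n).Finite)
    (hfin_b : (Set.range b).Finite) :
    ∀ n m : ℕ,
      (∀ A : Set ℝ, MeasurableSet A →
          A ⊆ Set.Ico 0 (1 + ⨆ j : ℕ, (t (j + 1) - t j)) →
          treeMeasure t b ((fun y => t n + y) '' A)
            = treeMeasure t b ((fun y => t m + y) '' A)) →
      b n = b m ∧ t (n + 1) - t n = t (m + 1) - t m :=
  treeMeasure_simple_decomposition_general t b ht_mono hb hfin_gaps
end

section
/- Green's formula with interface conditions: let s < t be real numbers with s, t ∉ {t_n : n}, and let u, v : [s, t] → ℂ be functions whose restriction to the closure of each connected component of [s,t] ∖ {t_n : n} is twice continuously differentiable, and which satisfy at every atom t_n ∈ (s, t) the interface conditions u(t_n+) = √b_n · u(t_n−), u'(t_n+) = u'(t_n−)/√b_n, and likewise for v. Then ∫_s^t ( u''(r) · conj(v(r)) − u(r) · conj(v''(r)) ) dr = W(u, v̄)(t) − W(u, v̄)(s), where W(f, g)(r) := f'(r)g(r) − f(r)g'(r) and v̄ denotes the pointwise complex conjugate of v. -/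
open Set Filter Topology MeasureTheory

/-- The part of the interval `J` off the atoms `{tₙ}`. -/
def offAtoms (ts : ℕ → ℝ) (J : Set ℝ) : Set ℝ := J \ Set.range ts

/-- One-sided limits of `u` and its derivative exist at the atom `ts n`, and the
interface conditions `u(tₙ+) = √bₙ · u(tₙ-)`, `u'(tₙ+) = u'(tₙ-)/√bₙ` hold. -/
def InterfaceAt (ts bs : ℕ → ℝ) (S : Set ℝ) (u : ℝ → ℂ) (n : ℕ) : Prop :=
  ∃ uL uR duL duR : ℂ,
    Tendsto u (nhdsWithin (ts n) (S ∩ Iio (ts n))) (nhds uL) ∧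
    Tendsto u (nhdsWithin (ts n) (S ∩ Ioi (ts n))) (nhds uR) ∧
    Tendsto (derivWithin u S) (nhdsWithin (ts n) (S ∩ Iio (ts n))) (nhds duL) ∧
    Tendsto (derivWithin u S) (nhdsWithin (ts n) (S ∩ Ioi (ts n))) (nhds duR) ∧
    uR = (Real.sqrt (bs n) : ℂ) * uL ∧
    duR = duL / (Real.sqrt (bs n) : ℂ)

/-- `u` is a solution of the interface equation `-u'' = z·u` for the atomic measure
with atoms `ts n` and branching numbers `bs n`, on the interval `J`:
`u` is twice continuously differentiable on `J` off the atoms with `-u'' = z·u` there,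
and at every atom in the interior of `J` it has one-sided limits satisfying
the interface conditions. -/
def IsInterfaceSolution (ts bs : ℕ → ℝ) (z : ℂ) (J : Set ℝ) (u : ℝ → ℂ) : Prop :=
  ContDiffOn ℝ 2 u (offAtoms ts J) ∧
  (∀ x ∈ offAtoms ts J,
      -(derivWithin (derivWithin u (offAtoms ts J)) (offAtoms ts J) x) = z * u x) ∧
  (∀ n, ts n ∈ interior J → InterfaceAt ts bs (offAtoms ts J) u n)

/-- The Wronskian `W(f, g)(r) = f'(r)·g(r) - f(r)·g'(r)`, with derivatives taken
within the set `S`. -/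
noncomputable def wron (S : Set ℝ) (f g : ℝ → ℂ) (r : ℝ) : ℂ :=
  derivWithin f S r * g r - f r * derivWithin g S r

/-- The Wronskian `W(f, ḡ)(r)` of `f` and the pointwise complex conjugate of `g`. -/
noncomputable def wronConj (S : Set ℝ) (f g : ℝ → ℂ) (r : ℝ) : ℂ :=
  derivWithin f S r * (starRingEnd ℂ) (g r)
    - f r * (starRingEnd ℂ) (derivWithin g S r)

/-- Piecewise `C²` regularity up to the closure of each component: `u` is `C²` on
`[s, τ]` off the atoms, and at each atom in `(s, τ)` the one-sided limits of
`u`, `u'` (with interface conditions) and of `u''` exist. -/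
def GreenHypothesis (ts bs : ℕ → ℝ) (s τ : ℝ) (u : ℝ → ℂ) : Prop :=
  ContDiffOn ℝ 2 u (offAtoms ts (Icc s τ)) ∧
  ∀ n, ts n ∈ Ioo s τ →
    InterfaceAt ts bs (offAtoms ts (Icc s τ)) u n ∧
    (∃ L : ℂ, Tendsto
        (derivWithin (derivWithin u (offAtoms ts (Icc s τ))) (offAtoms ts (Icc s τ)))
        (nhdsWithin (ts n) (offAtoms ts (Icc s τ) ∩ Iio (ts n))) (nhds L)) ∧
    (∃ L : ℂ, Tendsto
        (derivWithin (derivWithin u (offAtoms ts (Icc s τ))) (offAtoms ts (Icc s τ)))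
        (nhdsWithin (ts n) (offAtoms ts (Icc s τ) ∩ Ioi (ts n))) (nhds L))

/-!
Off the atoms, the Wronskian `W = W(u, v̄)` is differentiable with `W' = u'' v̄ - u v̄''`.
At an atom the interface conditions multiply `u, v` by `√bₙ` and `u', v'` by `1/√bₙ`, so both
products `u' v̄` and `u v̄'` are unchanged and `W` has no jump. The atoms form a closed countable
set (their gaps are bounded below), so the continuous extension of `W` to `[s, τ]` satisfies the
fundamental theorem of calculus with a countable exceptional set; the one-sided limits of `u''`
and `v''` at the atoms make the integrand integrable.
-/

section ExceptionalSet

variable {E : Type*} [NormedAddCommGroup E] {a b : ℝ} {A : Set ℝ}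

theorem nhdsWithin_eq_nhdsWithin_Iio_sup_Ioi {S : Set ℝ} {x : ℝ} (hx : x ∉ S) :
    𝓝[S] x = 𝓝[S ∩ Iio x] x ⊔ 𝓝[S ∩ Ioi x] x := by
  rw [← nhdsWithin_union, ← inter_union_distrib_left, Iio_union_Ioi, ← sdiff_eq,
    sdiff_singleton_eq_self hx]

theorem Icc_diff_mem_nhds (hA : IsClosed A) {x : ℝ} (hx : x ∈ Ioo a b \ A) :
    Icc a b \ A ∈ 𝓝 x :=
  inter_mem (Icc_mem_nhds hx.1.1 hx.1.2) (hA.isOpen_compl.mem_nhds hx.2)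

theorem uniqueDiffOn_Icc_diff (hab : a < b) (hA : IsClosed A) : UniqueDiffOn ℝ (Icc a b \ A) :=
  fun x hx => (uniqueDiffOn_Icc hab x hx.1).inter (hA.isOpen_compl.mem_nhds hx.2)

theorem Icc_subset_closure_Icc_diff (hab : a < b) (hA : A.Countable) :
    Icc a b ⊆ closure (Icc a b \ A) :=
  calc Icc a b = closure (Ioo a b) := (closure_Ioo hab.ne).symm
    _ ⊆ closure (Ioo a b ∩ Aᶜ) :=
      closure_minimal ((hA.dense_compl ℝ).open_subset_closure_inter isOpen_Ioo) isClosed_closure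
    _ ⊆ closure (Icc a b \ A) := closure_mono (inter_subset_inter_left _ Ioo_subset_Icc_self)

theorem integral_eq_sub_of_hasDerivAt_of_tendsto_nhdsWithin_diff [NormedSpace ℝ E]
    [CompleteSpace E] {F f : ℝ → E} (hab : a < b) (hA : A.Countable) (hA' : IsClosed A)
    (ha : a ∉ A) (hb : b ∉ A)
    (hFc : ContinuousOn F (Icc a b \ A))
    (hFA : ∀ x ∈ Icc a b ∩ A, ∃ y, Tendsto F (𝓝[Icc a b \ A] x) (𝓝 y))
    (hderiv : ∀ x ∈ Ioo a b \ A, HasDerivAt F (f x) x) (hf : IntervalIntegrable f volume a b) :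
    ∫ x in a..b, f x = F b - F a := by
  set S := Icc a b \ A
  have hext : ∀ x ∈ S, extendFrom S F x = F x := extendFrom_extends hFc
  have hlim : ∀ x ∈ Icc a b, ∃ y, Tendsto F (𝓝[S] x) (𝓝 y) := by
    intro x hx
    by_cases hxA : x ∈ A
    · exact hFA x ⟨hx, hxA⟩
    · exact ⟨F x, hFc x ⟨hx, hxA⟩⟩
  have hcont : ContinuousOn (extendFrom S F) (Icc a b) :=
    continuousOn_extendFrom (Icc_subset_closure_Icc_diff hab hA) hlim
  have hderiv' : ∀ x ∈ Ioo a b \ A, HasDerivAt (extendFrom S F) (f x) x := fun x hx =>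
    (hderiv x hx).congr_of_eventuallyEq
      (eventually_of_mem (Icc_diff_mem_nhds hA' hx) hext)
  rw [integral_eq_of_hasDerivAt_off_countable_of_le _ _ hab.le hA hcont hderiv' hf,
    hext b ⟨right_mem_Icc.2 hab.le, hb⟩, hext a ⟨left_mem_Icc.2 hab.le, ha⟩]

theorem integrableOn_Icc_of_tendsto_nhdsWithin_Iio_Ioi {f : ℝ → E} (hA : A.Countable)
    (hf : ContinuousOn f (Icc a b \ A))
    (hl : ∀ x ∈ Icc a b ∩ A, ∃ y, Tendsto f (𝓝[Icc a b \ A ∩ Iio x] x) (𝓝 y))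
    (hr : ∀ x ∈ Icc a b ∩ A, ∃ y, Tendsto f (𝓝[Icc a b \ A ∩ Ioi x] x) (𝓝 y)) :
    IntegrableOn f (Icc a b) := by
  set S := Icc a b \ A
  have hS : MeasurableSet S := measurableSet_Icc.diff hA.measurableSet
  have hlim : ∀ x ∈ Icc a b, (∃ y, Tendsto f (𝓝[S ∩ Iio x] x) (𝓝 y)) ∧
      ∃ y, Tendsto f (𝓝[S ∩ Ioi x] x) (𝓝 y) := by
    intro x hx
    by_cases hxA : x ∈ A
    · exact ⟨hl x ⟨hx, hxA⟩, hr x ⟨hx, hxA⟩⟩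
    · have hfx := hf x ⟨hx, hxA⟩
      exact ⟨⟨f x, hfx.mono inter_subset_left⟩, ⟨f x, hfx.mono inter_subset_left⟩⟩
  have hside : ∀ x, ∀ T : Set ℝ, MeasurableSet T → (∃ y, Tendsto f (𝓝[S ∩ T] x) (𝓝 y)) →
      IntegrableAtFilter f (𝓝[S ∩ T] x) volume := by
    rintro x T hT ⟨y, hy⟩
    have := (hS.inter hT).nhdsWithin_isMeasurablyGenerated x
    exact hy.integrableAtFilter
      ⟨S, mem_of_superset self_mem_nhdsWithin inter_subset_left, hf.aestronglyMeasurable hS⟩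
      (Measure.finiteAt_nhdsWithin _ _ _)
  refine LocallyIntegrableOn.integrableOn_isCompact (fun x hx => ?_) isCompact_Icc
  -- Up to the null set `insert x A`, a neighbourhood of `x` in `[a, b]` is one-sided in `S`.
  have hae : ae volume ≤ 𝓟 (insert x A)ᶜ := le_principal_iff.2 <|
    compl_mem_ae_iff.2 ((hA.insert x).measure_zero volume)
  have hsplit : Icc a b ∩ (insert x A)ᶜ ⊆ (S ∩ Iio x) ∪ (S ∩ Ioi x) := by
    rintro y ⟨hy, hyx⟩
    simp only [mem_compl_iff, mem_insert_iff, not_or] at hyx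
    rcases lt_or_gt_of_ne hyx.1 with h | h
    exacts [Or.inl ⟨⟨hy, hyx.2⟩, h⟩, Or.inr ⟨⟨hy, hyx.2⟩, h⟩]
  rw [← IntegrableAtFilter.inf_ae_iff]
  refine IntegrableAtFilter.filter_mono ?_ (IntegrableAtFilter.sup_iff.2
    ⟨hside x _ measurableSet_Iio (hlim x hx).1, hside x _ measurableSet_Ioi (hlim x hx).2⟩)
  calc 𝓝[Icc a b] x ⊓ ae volume ≤ 𝓝[Icc a b ∩ (insert x A)ᶜ] x := by
        rw [nhdsWithin_inter']; exact inf_le_inf_left _ hae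
    _ ≤ _ := (nhdsWithin_mono _ hsplit).trans_eq (nhdsWithin_union _ _ _)

end ExceptionalSet

theorem isClosed_range_of_forall_le_sub {ts : ℕ → ℝ} {γ : ℝ} (hγ : 0 < γ)
    (hgap : ∀ n, γ ≤ ts (n + 1) - ts n) : IsClosed (range ts) := by
  have hlow : ∀ n : ℕ, ts 0 + n * γ ≤ ts n := by
    intro n
    induction n with
    | zero => simp
    | succ k ih => push_cast; linarith [hgap k]
  have htop : Tendsto ts atTop atTop := tendsto_atTop_mono hlow <|
    tendsto_atTop_add_const_left _ _ (tendsto_natCast_atTop_atTop.atTop_mul_const hγ)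
  refine (isProperMap_iff_tendsto_cocompact.2 ⟨continuous_of_discreteTopology, ?_⟩).isClosed_range
  rw [cocompact_eq_atTop]
  exact htop.mono_right atTop_le_cocompact

noncomputable def greenIntegrand (S : Set ℝ) (u v : ℝ → ℂ) (r : ℝ) : ℂ :=
  derivWithin (derivWithin u S) S r * (starRingEnd ℂ) (v r)
    - u r * (starRingEnd ℂ) (derivWithin (derivWithin v S) S r)

section Wronskian

variable {S : Set ℝ} {u v : ℝ → ℂ}

theorem continuousOn_wronConj (hS : UniqueDiffOn ℝ S) (hu : ContDiffOn ℝ 2 u S)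
    (hv : ContDiffOn ℝ 2 v S) : ContinuousOn (wronConj S u v) S :=
  ((hu.continuousOn_derivWithin hS (by norm_num)).mul
      (Complex.continuous_conj.comp_continuousOn hv.continuousOn)).sub
    (hu.continuousOn.mul (Complex.continuous_conj.comp_continuousOn
      (hv.continuousOn_derivWithin hS (by norm_num))))

theorem continuousOn_greenIntegrand (hS : UniqueDiffOn ℝ S) (hu : ContDiffOn ℝ 2 u S)
    (hv : ContDiffOn ℝ 2 v S) : ContinuousOn (greenIntegrand S u v) S :=
  (((hu.derivWithin hS (m := 1) (by norm_num)).continuousOn_derivWithin hS le_rfl).mul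
      (Complex.continuous_conj.comp_continuousOn hv.continuousOn)).sub
    (hu.continuousOn.mul (Complex.continuous_conj.comp_continuousOn
      ((hv.derivWithin hS (m := 1) (by norm_num)).continuousOn_derivWithin hS le_rfl)))

theorem hasDerivAt_wronConj (hS : UniqueDiffOn ℝ S) (hu : ContDiffOn ℝ 2 u S)
    (hv : ContDiffOn ℝ 2 v S) {x : ℝ} (hx : S ∈ 𝓝 x) :
    HasDerivAt (wronConj S u v) (greenIntegrand S u v x) x := by
  have hderiv : ∀ {w : ℝ → ℂ} {n : ℕ}, ContDiffOn ℝ (n + 1) w S →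
      HasDerivAt w (derivWithin w S x) x := fun hw =>
    ((hw.differentiableOn (by simp)) x (mem_of_mem_nhds hx)).hasDerivWithinAt.hasDerivAt hx
  have hu' := hderiv (n := 1) hu
  have hv' := hderiv (n := 1) hv
  have hu'' := hderiv (n := 0) (hu.derivWithin hS (m := 1) (by norm_num))
  have hv'' := hderiv (n := 0) (hv.derivWithin hS (m := 1) (by norm_num))
  refine ((hu''.mul hv'.star).sub (hu'.mul hv''.star)).congr_deriv ?_
  simp only [greenIntegrand, starRingEnd_apply]
  ring

end Wronskian

section Limits

variable {S : Set ℝ} {u v : ℝ → ℂ} {l : Filter ℝ} {a a' b b' : ℂ}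

theorem tendsto_wronConj (hu : Tendsto u l (𝓝 a)) (hu' : Tendsto (derivWithin u S) l (𝓝 a'))
    (hv : Tendsto v l (𝓝 b)) (hv' : Tendsto (derivWithin v S) l (𝓝 b')) :
    Tendsto (wronConj S u v) l (𝓝 (a' * starRingEnd ℂ b - a * starRingEnd ℂ b')) :=
  (hu'.mul hv.star).sub (hu.mul hv'.star)

theorem tendsto_greenIntegrand (hu : Tendsto u l (𝓝 a))
    (hu'' : Tendsto (derivWithin (derivWithin u S) S) l (𝓝 a'))
    (hv : Tendsto v l (𝓝 b)) (hv'' : Tendsto (derivWithin (derivWithin v S) S) l (𝓝 b')) :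
    Tendsto (greenIntegrand S u v) l (𝓝 (a' * starRingEnd ℂ b - a * starRingEnd ℂ b')) :=
  (hu''.mul hv.star).sub (hu.mul hv''.star)

end Limits

theorem InterfaceAt.exists_tendsto_wronConj {ts bs : ℕ → ℝ} {S : Set ℝ} {u v : ℝ → ℂ} {n : ℕ}
    (hu : InterfaceAt ts bs S u n) (hv : InterfaceAt ts bs S v n) (hb : 0 < bs n)
    (hn : ts n ∉ S) : ∃ y, Tendsto (wronConj S u v) (𝓝[S] (ts n)) (𝓝 y) := by
  obtain ⟨uL, uR, duL, duR, huL, huR, hduL, hduR, rfl, rfl⟩ := hu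
  obtain ⟨vL, vR, dvL, dvR, hvL, hvR, hdvL, hdvR, rfl, rfl⟩ := hv
  have hc : (Real.sqrt (bs n) : ℂ) ≠ 0 := by exact_mod_cast (Real.sqrt_pos.2 hb).ne'
  refine ⟨_, nhdsWithin_eq_nhdsWithin_Iio_sup_Ioi hn ▸
    tendsto_sup.2 ⟨tendsto_wronConj huL hduL hvL hdvL, ?_⟩⟩
  convert tendsto_wronConj huR hduR hvR hdvR using 2
  simp only [map_mul, map_div₀, Complex.conj_ofReal]
  field_simp

theorem GreenHypothesis.exists_tendsto_greenIntegrand {ts bs : ℕ → ℝ} {s τ : ℝ} {u v : ℝ → ℂ}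
    (hu : GreenHypothesis ts bs s τ u) (hv : GreenHypothesis ts bs s τ v) {n : ℕ}
    (hn : ts n ∈ Ioo s τ) :
    (∃ y, Tendsto (greenIntegrand (offAtoms ts (Icc s τ)) u v)
      (𝓝[offAtoms ts (Icc s τ) ∩ Iio (ts n)] (ts n)) (𝓝 y)) ∧
    ∃ y, Tendsto (greenIntegrand (offAtoms ts (Icc s τ)) u v)
      (𝓝[offAtoms ts (Icc s τ) ∩ Ioi (ts n)] (ts n)) (𝓝 y) := by
  obtain ⟨⟨_, _, _, _, huL, huR, -⟩, ⟨_, hu''L⟩, ⟨_, hu''R⟩⟩ := hu.2 n hn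
  obtain ⟨⟨_, _, _, _, hvL, hvR, -⟩, ⟨_, hv''L⟩, ⟨_, hv''R⟩⟩ := hv.2 n hn
  exact ⟨⟨_, tendsto_greenIntegrand huL hu''L hvL hv''L⟩,
    ⟨_, tendsto_greenIntegrand huR hu''R hvR hv''R⟩⟩

theorem green_formula_general
    (ts bs : ℕ → ℝ) (γ : ℝ) (hγ : 0 < γ)
    (hgap : ∀ n, γ ≤ ts (n + 1) - ts n)
    (hbs : ∀ n, 1 < bs n)
    (s τ : ℝ) (hsτ : s < τ) (hs : s ∉ Set.range ts) (hτ : τ ∉ Set.range ts)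
    (u v : ℝ → ℂ)
    (hu : GreenHypothesis ts bs s τ u) (hv : GreenHypothesis ts bs s τ v) :
    (∫ r in s..τ,
        (derivWithin (derivWithin u (offAtoms ts (Icc s τ))) (offAtoms ts (Icc s τ)) r
            * (starRingEnd ℂ) (v r)
          - u r * (starRingEnd ℂ)
              (derivWithin (derivWithin v (offAtoms ts (Icc s τ))) (offAtoms ts (Icc s τ)) r)))
      = wronConj (offAtoms ts (Icc s τ)) u v τ - wronConj (offAtoms ts (Icc s τ)) u v s := by
  have hA : IsClosed (range ts) := isClosed_range_of_forall_le_sub hγ hgap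
  have hS : UniqueDiffOn ℝ (offAtoms ts (Icc s τ)) := uniqueDiffOn_Icc_diff hsτ hA
  have hatom : ∀ x ∈ Icc s τ ∩ range ts, ∃ n, ts n = x ∧ ts n ∈ Ioo s τ := by
    rintro x ⟨hx, n, rfl⟩
    exact ⟨n, rfl, hx.1.lt_of_ne fun h => hs ⟨n, h.symm⟩, hx.2.lt_of_ne fun h => hτ ⟨n, h⟩⟩
  have hint : IntegrableOn (greenIntegrand (offAtoms ts (Icc s τ)) u v) (Icc s τ) := by
    refine integrableOn_Icc_of_tendsto_nhdsWithin_Iio_Ioi (countable_range ts)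
      (continuousOn_greenIntegrand hS hu.1 hv.1) (fun x hx => ?_) (fun x hx => ?_) <;>
      obtain ⟨n, rfl, hn⟩ := hatom x hx
    exacts [(hu.exists_tendsto_greenIntegrand hv hn).1, (hu.exists_tendsto_greenIntegrand hv hn).2]
  refine integral_eq_sub_of_hasDerivAt_of_tendsto_nhdsWithin_diff hsτ (countable_range ts) hA hs hτ
    (continuousOn_wronConj hS hu.1 hv.1) (fun x hx => ?_)
    (fun x hx => hasDerivAt_wronConj hS hu.1 hv.1 (Icc_diff_mem_nhds hA hx))
    ((intervalIntegrable_iff_integrableOn_Icc_of_le hsτ.le).2 hint)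
  obtain ⟨n, rfl, hn⟩ := hatom x hx
  exact (hu.2 n hn).1.exists_tendsto_wronConj (hv.2 n hn).1 (by linarith [hbs n])
    fun h => h.2 ⟨n, rfl⟩

/-- Green's formula with interface conditions:
`∫ₛᵗ (u'' v̄ - u v̄'') dr = W(u, v̄)(t) - W(u, v̄)(s)`. -/
theorem green_formula
    (ts bs : ℕ → ℝ) (γ : ℝ) (hγ : 0 < γ)
    (ht_mono : StrictMono ts) (hgap : ∀ n, γ ≤ ts (n + 1) - ts n)
    (hbs : ∀ n, 1 < bs n)
    (s τ : ℝ) (hsτ : s < τ) (hs : s ∉ Set.range ts) (hτ : τ ∉ Set.range ts)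
    (u v : ℝ → ℂ)
    (hu : GreenHypothesis ts bs s τ u) (hv : GreenHypothesis ts bs s τ v) :
    (∫ r in s..τ,
        (derivWithin (derivWithin u (offAtoms ts (Icc s τ))) (offAtoms ts (Icc s τ)) r
            * (starRingEnd ℂ) (v r)
          - u r * (starRingEnd ℂ)
              (derivWithin (derivWithin v (offAtoms ts (Icc s τ))) (offAtoms ts (Icc s τ)) r)))
      = wronConj (offAtoms ts (Icc s τ)) u v τ - wronConj (offAtoms ts (Icc s τ)) u v s :=
  green_formula_general ts bs γ hγ hgap hbs s τ hsτ hs hτ u v hu hv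
end

section
/- Constancy of the Wronskian: let z ∈ ℂ and let u, v both be solutions of the interface equation −u'' = z u for μ on an interval [a, b] with a, b ∉ {t_n : n}. Then W(u, v) is constant on [a, b] ∖ {t_n : n}. In particular, if u_N, u_D are the solutions on [a, b] with u_N(a) = 1, u_N'(a) = 0, u_D(a) = 0, u_D'(a) = 1, then W(u_N, u_D)(r) = −1 for all r ∈ [a, b] ∖ {t_n : n}. -/
open Set Filter Topology MeasureTheory

/-!
Off the atoms, the Wronskian of two solutions of `-u'' = z u` has derivative `f'' g - f g'' = 0`,
so it is constant on every atom-free interval. At an atom the interface conditions multiply `u` by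
`√bₙ` and `u'` by `1/√bₙ`; these factors cancel in `W`, so its one-sided limits agree. As the
atoms are `γ`-separated, any two points are joined by finitely many such crossings.
-/

section Atoms

variable {ts : ℕ → ℝ} {γ : ℝ}

lemma add_mul_le_of_gap (hgap : ∀ n, γ ≤ ts (n + 1) - ts n) (n : ℕ) : ts 0 + n * γ ≤ ts n := by
  induction n with
  | zero => simp
  | succ n ih => push_cast; linarith [hgap n]

lemma tendsto_atTop_of_gap (hγ : 0 < γ) (hgap : ∀ n, γ ≤ ts (n + 1) - ts n) :
    Tendsto ts atTop atTop :=
  tendsto_atTop_mono (add_mul_le_of_gap hgap)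
    (tendsto_atTop_add_const_left _ _ (tendsto_natCast_atTop_atTop.atTop_mul_const hγ))

lemma isClosed_range_of_tendsto_atTop (h : Tendsto ts atTop atTop) : IsClosed (range ts) :=
  (isProperMap_iff_tendsto_cocompact.2 ⟨continuous_of_discreteTopology, by
    rw [cocompact_eq_cofinite, Nat.cofinite_eq_atTop]
    exact h.mono_right atTop_le_cocompact⟩).isClosed_range

lemma disjoint_range_Iio_zero (ht : StrictMono ts) : Disjoint (range ts) (Iio (ts 0)) :=
  disjoint_left.2 fun _ ⟨m, hm⟩ h => (ht.monotone (Nat.zero_le m)).not_gt (hm ▸ h)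

lemma disjoint_range_Ioo_succ (ht : StrictMono ts) (n : ℕ) :
    Disjoint (range ts) (Ioo (ts n) (ts (n + 1))) := by
  refine disjoint_left.2 fun _ ⟨m, hm⟩ h => ?_
  subst hm
  have := ht.lt_iff_lt.1 h.1
  have := ht.lt_iff_lt.1 h.2
  omega

lemma disjoint_range_Ioo_sub (ht : StrictMono ts) (hgap : ∀ n, γ ≤ ts (n + 1) - ts n) (n : ℕ) :
    Disjoint (range ts) (Ioo (ts n - γ) (ts n)) := by
  refine disjoint_left.2 fun _ ⟨m, hm⟩ h => ?_
  subst hm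
  have : ts (m + 1) ≤ ts n := ht.monotone (ht.lt_iff_lt.1 h.2)
  linarith [h.1, hgap m]

lemma inter_subset_offAtoms {J A : Set ℝ} (h : Disjoint (range ts) A) : J ∩ A ⊆ offAtoms ts J :=
  subset_sdiff.2 ⟨inter_subset_left, h.symm.mono_left inter_subset_right⟩

lemma uniqueDiffOn_offAtoms (h : IsClosed (range ts)) {a b : ℝ} (hab : a < b) :
    UniqueDiffOn ℝ (offAtoms ts (Icc a b)) :=
  (uniqueDiffOn_Icc hab).inter h.isOpen_compl

end Atoms

def HasMatchingOneSidedLimits {E : Type*} [TopologicalSpace E] (S : Set ℝ) (F : ℝ → E) (t : ℝ) :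
    Prop :=
  ∃ c, Tendsto F (𝓝[S ∩ Iio t] t) (𝓝 c) ∧ Tendsto F (𝓝[S ∩ Ioi t] t) (𝓝 c)

section Gluing

variable {E : Type*} [TopologicalSpace E] [T2Space E] {ts : ℕ → ℝ} {γ : ℝ} {J : Set ℝ}
  [J.OrdConnected] {F : ℝ → E}

lemma HasMatchingOneSidedLimits.eq {S : Set ℝ} {t x y : ℝ} (h : HasMatchingOneSidedLimits S F t)
    [(𝓝[S ∩ Iio t] t).NeBot] [(𝓝[S ∩ Ioi t] t).NeBot]
    (hx : ∀ᶠ w in 𝓝[S ∩ Iio t] t, F w = F x) (hy : ∀ᶠ w in 𝓝[S ∩ Ioi t] t, F w = F y) :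
    F x = F y := by
  obtain ⟨c, hl, hr⟩ := h
  exact (tendsto_nhds_unique (tendsto_const_nhds.congr' (hx.mono fun _ => Eq.symm)) hl).trans
    (tendsto_nhds_unique (tendsto_const_nhds.congr' (hy.mono fun _ => Eq.symm)) hr).symm

lemma eq_across_atom (hγ : 0 < γ) (ht : StrictMono ts) (hgap : ∀ n, γ ≤ ts (n + 1) - ts n)
    (hconst : ∀ P ⊆ offAtoms ts J, P.OrdConnected → ∀ x ∈ P, ∀ y ∈ P, F x = F y)
    (hjump : ∀ n, ts n ∈ interior J → HasMatchingOneSidedLimits (offAtoms ts J) F (ts n))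
    {n : ℕ} {x y : ℝ} (hx : x ∈ offAtoms ts J) (hy : y ∈ offAtoms ts J)
    (hxt : x < ts n) (hty : ts n < y) (hy' : y < ts (n + 1))
    (hleft : ∀ w ∈ offAtoms ts J, w < ts n → F w = F x) : F x = F y := by
  set S := offAtoms ts J
  have hxyJ : Ioo x y ⊆ J := Ioo_subset_Icc_self.trans (Set.Icc_subset J hx.1 hy.1)
  have hright : J ∩ Ioo (ts n) (ts (n + 1)) ⊆ S :=
    inter_subset_offAtoms (disjoint_range_Ioo_succ ht n)
  have hleftS : J ∩ Ioo (ts n - γ) (ts n) ⊆ S :=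
    inter_subset_offAtoms (disjoint_range_Ioo_sub ht hgap n)
  have : (𝓝[S ∩ Iio (ts n)] ts n).NeBot := by
    refine (right_nhdsWithin_Ioo_neBot (max_lt hxt (sub_lt_self _ hγ))).mono (nhdsWithin_mono _ ?_)
    intro w hw
    have hw' := max_lt_iff.1 hw.1
    exact ⟨hleftS ⟨hxyJ ⟨hw'.1, hw.2.trans hty⟩, hw'.2, hw.2⟩, hw.2⟩
  have : (𝓝[S ∩ Ioi (ts n)] ts n).NeBot :=
    (left_nhdsWithin_Ioo_neBot hty).mono (nhdsWithin_mono _ fun w hw =>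
      ⟨hright ⟨hxyJ ⟨hxt.trans hw.1, hw.2⟩, hw.1, hw.2.trans hy'⟩, hw.1⟩)
  refine (hjump n (mem_interior.2 ⟨Ioo x y, hxyJ, isOpen_Ioo, hxt, hty⟩)).eq
    (eventually_nhdsWithin_of_forall fun w hw => hleft w hw.1 hw.2) ?_
  filter_upwards [self_mem_nhdsWithin, nhdsWithin_le_nhds (Iio_mem_nhds (ht (Nat.lt_succ_self n)))]
    with w hw hw'
  exact hconst _ hright inferInstance w ⟨hw.1.1, hw.2, hw'⟩ y ⟨hy.1, hty, hy'⟩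

lemma eq_on_offAtoms_inter_Iio (hγ : 0 < γ) (ht : StrictMono ts)
    (hgap : ∀ n, γ ≤ ts (n + 1) - ts n)
    (hconst : ∀ P ⊆ offAtoms ts J, P.OrdConnected → ∀ x ∈ P, ∀ y ∈ P, F x = F y)
    (hjump : ∀ n, ts n ∈ interior J → HasMatchingOneSidedLimits (offAtoms ts J) F (ts n))
    (n : ℕ) : ∀ x ∈ offAtoms ts J ∩ Iio (ts n), ∀ y ∈ offAtoms ts J ∩ Iio (ts n), F x = F y := by
  induction n with
  | zero =>
    exact fun x hx y hy => hconst _ (inter_subset_offAtoms (disjoint_range_Iio_zero ht))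
      inferInstance x ⟨hx.1.1, hx.2⟩ y ⟨hy.1.1, hy.2⟩
  | succ n ih =>
    intro x hx y hy
    wlog hxy : x ≤ y generalizing x y
    · exact (this y hy x hx (le_of_not_ge hxy)).symm
    have hne : ∀ w ∈ offAtoms ts J, w ≠ ts n := fun w hw h => hw.2 ⟨n, h.symm⟩
    rcases (hne y hy.1).lt_or_gt with hyn | hny
    · exact ih x ⟨hx.1, hxy.trans_lt hyn⟩ y ⟨hy.1, hyn⟩
    rcases (hne x hx.1).lt_or_gt with hxn | hnx
    · exact eq_across_atom hγ ht hgap hconst hjump hx.1 hy.1 hxn hny hy.2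
        fun w hw hwn => ih w ⟨hw, hwn⟩ x ⟨hx.1, hxn⟩
    · exact hconst _ (inter_subset_offAtoms (disjoint_range_Ioo_succ ht n)) inferInstance
        x ⟨hx.1.1, hnx, hx.2⟩ y ⟨hy.1.1, hny, hy.2⟩

theorem eq_on_offAtoms_of_hasMatchingOneSidedLimits (hγ : 0 < γ) (ht : StrictMono ts)
    (hgap : ∀ n, γ ≤ ts (n + 1) - ts n)
    (hconst : ∀ P ⊆ offAtoms ts J, P.OrdConnected → ∀ x ∈ P, ∀ y ∈ P, F x = F y)
    (hjump : ∀ n, ts n ∈ interior J → HasMatchingOneSidedLimits (offAtoms ts J) F (ts n))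
    {x y : ℝ} (hx : x ∈ offAtoms ts J) (hy : y ∈ offAtoms ts J) : F x = F y := by
  obtain ⟨n, hn⟩ := ((tendsto_atTop_of_gap hγ hgap).eventually_gt_atTop (max x y)).exists
  exact eq_on_offAtoms_inter_Iio hγ ht hgap hconst hjump n x
    ⟨hx, (le_max_left _ _).trans_lt hn⟩ y ⟨hy, (le_max_right _ _).trans_lt hn⟩

end Gluing

section Wronskian

variable {S : Set ℝ} {z : ℂ} {f g : ℝ → ℂ}

lemma hasDerivWithinAt_wron (hS : UniqueDiffOn ℝ S) (hf : ContDiffOn ℝ 2 f S)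
    (hg : ContDiffOn ℝ 2 g S) (hf'' : ∀ x ∈ S, -derivWithin (derivWithin f S) S x = z * f x)
    (hg'' : ∀ x ∈ S, -derivWithin (derivWithin g S) S x = z * g x) {x : ℝ} (hx : x ∈ S) :
    HasDerivWithinAt (wron S f g) 0 S x := by
  have hderiv {h : ℝ → ℂ} (hh : ContDiffOn ℝ 2 h S) :
      HasDerivWithinAt h (derivWithin h S x) S x ∧
        HasDerivWithinAt (derivWithin h S) (derivWithin (derivWithin h S) S x) S x :=
    ⟨(hh.differentiableOn two_ne_zero x hx).hasDerivWithinAt,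
      ((hh.derivWithin hS (by norm_num)).differentiableOn one_ne_zero x hx).hasDerivWithinAt⟩
  obtain ⟨hf₁, hf₂⟩ := hderiv hf
  obtain ⟨hg₁, hg₂⟩ := hderiv hg
  refine ((hf₂.mul hg₁).sub (hf₁.mul hg₂)).congr_deriv ?_
  linear_combination f x * hg'' x hx - g x * hf'' x hx

lemma wron_eq_of_ordConnected (hS : UniqueDiffOn ℝ S) (hf : ContDiffOn ℝ 2 f S)
    (hg : ContDiffOn ℝ 2 g S) (hf'' : ∀ x ∈ S, -derivWithin (derivWithin f S) S x = z * f x)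
    (hg'' : ∀ x ∈ S, -derivWithin (derivWithin g S) S x = z * g x) {P : Set ℝ} (hPS : P ⊆ S)
    (hP : P.OrdConnected) {x y : ℝ} (hx : x ∈ P) (hy : y ∈ P) : wron S f g x = wron S f g y := by
  have := hP.convex.norm_image_sub_le_of_norm_hasDerivWithin_le
    (fun w hw => (hasDerivWithinAt_wron hS hf hg hf'' hg'' (hPS hw)).mono hPS)
    (fun _ _ => norm_zero.le) hy hx
  simpa [sub_eq_zero] using this

lemma InterfaceAt.hasMatchingOneSidedLimits_wron {ts bs : ℕ → ℝ} {n : ℕ}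
    (hf : InterfaceAt ts bs S f n) (hg : InterfaceAt ts bs S g n) (hb : 0 < bs n) :
    HasMatchingOneSidedLimits S (wron S f g) (ts n) := by
  obtain ⟨fL, _, dfL, _, hfL, hfR, hdfL, hdfR, rfl, rfl⟩ := hf
  obtain ⟨gL, _, dgL, _, hgL, hgR, hdgL, hdgR, rfl, rfl⟩ := hg
  refine ⟨dfL * gL - fL * dgL, (hdfL.mul hgL).sub (hfL.mul hdgL), ?_⟩
  have : (√(bs n) : ℂ) ≠ 0 := by exact_mod_cast (Real.sqrt_pos.2 hb).ne'
  have hW : dfL / √(bs n) * (√(bs n) * gL) - √(bs n) * fL * (dgL / √(bs n)) =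
      dfL * gL - fL * dgL := by
    field_simp
  exact hW ▸ (hdfR.mul hgR).sub (hfR.mul hdgR)

theorem IsInterfaceSolution.wron_eq {ts bs : ℕ → ℝ} {γ : ℝ} (hγ : 0 < γ) (ht : StrictMono ts)
    (hgap : ∀ n, γ ≤ ts (n + 1) - ts n) (hbs : ∀ n, 0 < bs n) {a b : ℝ}
    (hf : IsInterfaceSolution ts bs z (Icc a b) f) (hg : IsInterfaceSolution ts bs z (Icc a b) g)
    {x y : ℝ} (hx : x ∈ offAtoms ts (Icc a b)) (hy : y ∈ offAtoms ts (Icc a b)) :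
    wron (offAtoms ts (Icc a b)) f g x = wron (offAtoms ts (Icc a b)) f g y := by
  refine eq_on_offAtoms_of_hasMatchingOneSidedLimits hγ ht hgap (fun P hPS hP x hx y hy => ?_)
    (fun n hn => (hf.2.2 n hn).hasMatchingOneSidedLimits_wron (hg.2.2 n hn) (hbs n)) hx hy
  rcases eq_or_ne x y with rfl | hxy
  · rfl
  have hab : a < b := by
    by_contra
    exact hxy (by linarith [(hPS hx).1.1, (hPS hx).1.2, (hPS hy).1.1, (hPS hy).1.2])
  exact wron_eq_of_ordConnected
    (uniqueDiffOn_offAtoms (isClosed_range_of_tendsto_atTop (tendsto_atTop_of_gap hγ hgap)) hab)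
    hf.1 hg.1 hf.2.1 hg.2.1 hPS hP hx hy

end Wronskian

theorem wronskian_constant_general
    (ts bs : ℕ → ℝ) (γ : ℝ) (hγ : 0 < γ)
    (ht_mono : StrictMono ts) (hgap : ∀ n, γ ≤ ts (n + 1) - ts n)
    (hbs : ∀ n, 1 < bs n)
    (z : ℂ) (a b : ℝ) (hab : a ≤ b)
    (ha : a ∉ Set.range ts)
    (u v : ℝ → ℂ)
    (hu : IsInterfaceSolution ts bs z (Icc a b) u)
    (hv : IsInterfaceSolution ts bs z (Icc a b) v) :
    (∀ r₁ ∈ offAtoms ts (Icc a b), ∀ r₂ ∈ offAtoms ts (Icc a b),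
        wron (offAtoms ts (Icc a b)) u v r₁ = wron (offAtoms ts (Icc a b)) u v r₂) ∧
    (∀ uN uD : ℝ → ℂ,
        IsInterfaceSolution ts bs z (Icc a b) uN →
        IsInterfaceSolution ts bs z (Icc a b) uD →
        uN a = 1 → derivWithin uN (offAtoms ts (Icc a b)) a = 0 →
        uD a = 0 → derivWithin uD (offAtoms ts (Icc a b)) a = 1 →
        ∀ r ∈ offAtoms ts (Icc a b), wron (offAtoms ts (Icc a b)) uN uD r = -1) := by
  have hbs₀ n : 0 < bs n := one_pos.trans (hbs n)
  refine ⟨fun r₁ hr₁ r₂ hr₂ => hu.wron_eq hγ ht_mono hgap hbs₀ hv hr₁ hr₂, ?_⟩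
  intro uN uD huN huD hN hN' hD hD' r hr
  rw [← huN.wron_eq hγ ht_mono hgap hbs₀ huD ⟨left_mem_Icc.2 hab, ha⟩ hr]
  simp [wron, hN, hN', hD, hD']

/-- constancy of the Wronskian: for two solutions `u, v` of the interface
equation `-u'' = z u` on `[a, b]`, the Wronskian `W(u, v)` is constant on `[a, b]` off the
atoms; in particular for the solutions `u_N, u_D` with `u_N(a) = 1, u_N'(a) = 0`,
`u_D(a) = 0, u_D'(a) = 1` one has `W(u_N, u_D) ≡ -1` there. -/
theorem wronskian_constant
    (ts bs : ℕ → ℝ) (γ : ℝ) (hγ : 0 < γ)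
    (ht_mono : StrictMono ts) (hgap : ∀ n, γ ≤ ts (n + 1) - ts n)
    (hbs : ∀ n, 1 < bs n)
    (z : ℂ) (a b : ℝ) (hab : a ≤ b)
    (ha : a ∉ Set.range ts) (hb : b ∉ Set.range ts)
    (u v : ℝ → ℂ)
    (hu : IsInterfaceSolution ts bs z (Icc a b) u)
    (hv : IsInterfaceSolution ts bs z (Icc a b) v) :
    (∀ r₁ ∈ offAtoms ts (Icc a b), ∀ r₂ ∈ offAtoms ts (Icc a b),
        wron (offAtoms ts (Icc a b)) u v r₁ = wron (offAtoms ts (Icc a b)) u v r₂) ∧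
    (∀ uN uD : ℝ → ℂ,
        IsInterfaceSolution ts bs z (Icc a b) uN →
        IsInterfaceSolution ts bs z (Icc a b) uD →
        uN a = 1 → derivWithin uN (offAtoms ts (Icc a b)) a = 0 →
        uD a = 0 → derivWithin uD (offAtoms ts (Icc a b)) a = 1 →
        ∀ r ∈ offAtoms ts (Icc a b), wron (offAtoms ts (Icc a b)) uN uD r = -1) :=
  wronskian_constant_general ts bs γ hγ ht_mono hgap hbs z a b hab ha u v hu hv
end

section
/- Convergence of atoms under vague convergence: let C, γ > 0, let (ν_k) be a sequence in M_a^{C,γ}(ℝ) and ν ∈ M_a^{C,γ}(ℝ) with ν_k → ν vaguely, i.e., ∫ f dν_k → ∫ f dν for every continuous compactly supported f : ℝ → ℝ. Then for every atom s of ν there exists a sequence (s_k) of reals with s_k → s and ν_k({s_k}) → ν({s}). -/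
open Set Filter Topology MeasureTheory

/-- `ν ∈ M_a^{C,γ}(ℝ)`: `ν` is a nonnegative atomic Borel measure on `ℝ` with
`sup_x ν([x, x+1]) ≤ C`, concentrated on its set of atoms, whose atoms are pairwise
at distance at least `γ`. -/
def MemMaClass (C γ : ℝ) (ν : Measure ℝ) : Prop :=
  (∀ x : ℝ, ν (Set.Icc x (x + 1)) ≤ ENNReal.ofReal C) ∧
  ν {x : ℝ | ν {x} ≠ 0}ᶜ = 0 ∧
  (∀ s t : ℝ, ν {s} ≠ 0 → ν {t} ≠ 0 → s ≠ t → γ ≤ |s - t|)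


/-- trapezoid bump: equals 1 on `|x - s| ≤ a`, 0 on `|x - s| ≥ b`. -/
noncomputable def trap (s a b x : ℝ) : ℝ := max 0 (min 1 ((b - |x - s|) / (b - a)))

lemma trap_nonneg (s a b x : ℝ) : 0 ≤ trap s a b x := le_max_left _ _

lemma trap_le_one (s a b x : ℝ) : trap s a b x ≤ 1 :=
  max_le zero_le_one (min_le_left _ _)

lemma trap_continuous (s a b : ℝ) : Continuous (trap s a b) := by
  unfold trap
  exact continuous_const.max (continuous_const.min
    ((continuous_const.sub ((continuous_id.sub continuous_const).abs)).div_const _))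

lemma trap_eq_one (s a b x : ℝ) (hab : a < b) (h : |x - s| ≤ a) : trap s a b x = 1 := by
  have h1 : (1 : ℝ) ≤ (b - |x - s|) / (b - a) := by
    rw [le_div_iff₀ (by linarith)]; linarith
  unfold trap
  rw [min_eq_left h1, max_eq_right zero_le_one]

lemma trap_eq_zero (s a b x : ℝ) (hab : a < b) (h : b ≤ |x - s|) : trap s a b x = 0 := by
  have h1 : (b - |x - s|) / (b - a) ≤ 0 :=
    div_nonpos_iff.2 (Or.inr ⟨by linarith, by linarith⟩)
  unfold trap
  exact max_eq_left (le_trans (min_le_right _ _) h1)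

lemma trap_lt_of_ne (s a b x : ℝ) (hab : a < b) (h : trap s a b x ≠ 0) : |x - s| < b := by
  by_contra h'
  exact h (trap_eq_zero s a b x hab (not_lt.1 h'))

lemma trap_hasCompactSupport (s a b : ℝ) (hab : a < b) : HasCompactSupport (trap s a b) := by
  refine HasCompactSupport.intro (isCompact_Icc (a := s - b) (b := s + b)) fun x hx => ?_
  refine trap_eq_zero s a b x hab ?_
  simp only [mem_Icc, not_and_or, not_le] at hx
  rcases hx with h | h
  · calc b ≤ s - x := by linarith
      _ ≤ |s - x| := le_abs_self _
      _ = |x - s| := abs_sub_comm _ _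
  · calc b ≤ x - s := by linarith
      _ ≤ |x - s| := le_abs_self _

lemma finiteOnCompacts_of_bound (μ : Measure ℝ) (C : ℝ)
    (h : ∀ x : ℝ, μ (Set.Icc x (x + 1)) ≤ ENNReal.ofReal C) :
    IsFiniteMeasureOnCompacts μ := by
  constructor
  intro K hK
  obtain ⟨r, hr⟩ := hK.isBounded.subset_closedBall 0
  rw [Real.closedBall_eq_Icc] at hr
  have key : ∀ n : ℕ, ∀ a : ℝ, μ (Icc a (a + n)) < ⊤ := by
    intro n
    induction n with
    | zero =>
      intro a
      calc μ (Icc a (a + (0:ℕ))) ≤ μ (Icc a (a + 1)) :=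
            measure_mono (Icc_subset_Icc le_rfl (by norm_num))
        _ ≤ ENNReal.ofReal C := h a
        _ < ⊤ := ENNReal.ofReal_lt_top
    | succ n ih =>
      intro a
      have hsub : Icc a (a + ((n:ℕ)+1 : ℕ)) ⊆ Icc a (a + n) ∪ Icc (a + n) (a + n + 1) := by
        intro x hx
        rcases le_total x (a + n) with h' | h'
        · exact Or.inl ⟨hx.1, h'⟩
        · refine Or.inr ⟨h', ?_⟩
          have := hx.2
          push_cast at this ⊢
          linarith
      calc μ (Icc a (a + ((n:ℕ)+1 : ℕ)))
          ≤ μ (Icc a (a + n)) + μ (Icc (a + n) (a + n + 1)) :=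
            le_trans (measure_mono hsub) (measure_union_le _ _)
        _ < ⊤ := ENNReal.add_lt_top.2 ⟨ih a,
            lt_of_le_of_lt (h _) ENNReal.ofReal_lt_top⟩
  have hce : (r - (-r)) ≤ ((⌈r - (-r)⌉₊ : ℕ) : ℝ) := Nat.le_ceil _
  calc μ K ≤ μ (Icc (-r) ((-r) + (⌈r - (-r)⌉₊ : ℕ))) :=
        measure_mono (hr.trans (Icc_subset_Icc (by linarith) (by linarith)))
    _ < ⊤ := key _ _

lemma integral_eq_of_unique_atom (μ : Measure ℝ)
    (hconc : μ {x : ℝ | μ {x} ≠ 0}ᶜ = 0)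
    (f : ℝ → ℝ) (p : ℝ)
    (hp : ∀ t : ℝ, f t ≠ 0 → μ {t} ≠ 0 → t = p) :
    ∫ x, f x ∂μ = f p * (μ {p}).toReal := by
  have hae : f =ᵐ[μ] Set.indicator {p} f := by
    rw [Filter.EventuallyEq, ae_iff]
    refine measure_mono_null (fun x hx => ?_) hconc
    simp only [mem_setOf_eq] at hx
    simp only [mem_compl_iff, mem_setOf_eq, not_not]
    by_contra hx0
    rcases eq_or_ne x p with rfl | hxp
    · exact hx (by simp)
    · have hfx : f x ≠ 0 := by
        intro h0
        exact hx (by simp [Set.indicator, hxp, h0])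
      exact hxp (hp x hfx hx0)
  rw [integral_congr_ae hae, integral_indicator (measurableSet_singleton p),
    Measure.restrict_singleton, integral_smul_measure, integral_dirac, smul_eq_mul, mul_comm]

theorem atoms_converge_of_vague'
    (C γ : ℝ) (hC : 0 < C) (hγ : 0 < γ)
    (ν : ℕ → Measure ℝ) (ν' : Measure ℝ)
    (hν : ∀ k, (∀ x : ℝ, ν k (Set.Icc x (x + 1)) ≤ ENNReal.ofReal C) ∧
      ν k {x : ℝ | ν k {x} ≠ 0}ᶜ = 0 ∧
      (∀ s t : ℝ, ν k {s} ≠ 0 → ν k {t} ≠ 0 → s ≠ t → γ ≤ |s - t|))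
    (hν' : (∀ x : ℝ, ν' (Set.Icc x (x + 1)) ≤ ENNReal.ofReal C) ∧
      ν' {x : ℝ | ν' {x} ≠ 0}ᶜ = 0 ∧
      (∀ s t : ℝ, ν' {s} ≠ 0 → ν' {t} ≠ 0 → s ≠ t → γ ≤ |s - t|))
    (hvague : ∀ f : ℝ → ℝ, Continuous f → HasCompactSupport f →
        Filter.Tendsto (fun k => ∫ x, f x ∂(ν k)) Filter.atTop
          (nhds (∫ x, f x ∂ν'))) :
    ∀ s : ℝ, ν' {s} ≠ 0 →
      ∃ sk : ℕ → ℝ, Filter.Tendsto sk Filter.atTop (nhds s) ∧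
        Filter.Tendsto (fun k => ν k {sk k}) Filter.atTop (nhds (ν' {s})) := by
  classical
  intro s hs
  obtain ⟨hC', hconc', hsep'⟩ := hν'
  have hγ4 : 0 < γ/4 := by linarith
  -- singletons have finite measure
  have hfin : ∀ (μ : Measure ℝ), (∀ x : ℝ, μ (Set.Icc x (x+1)) ≤ ENNReal.ofReal C) →
      ∀ x : ℝ, μ {x} ≠ ⊤ := by
    intro μ hb x
    have h1 : μ {x} ≤ ENNReal.ofReal C :=
      le_trans (measure_mono (Set.singleton_subset_iff.2 (Set.mem_Icc.2 ⟨le_rfl, by linarith⟩))) (hb x)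
    exact (lt_of_le_of_lt h1 ENNReal.ofReal_lt_top).ne
  set m := (ν' {s}).toReal with hm_def
  have hm_pos : 0 < m := ENNReal.toReal_pos hs (hfin ν' hC' s)
  have hν's : ν' {s} = ENNReal.ofReal m := (ENNReal.ofReal_toReal (hfin ν' hC' s)).symm
  -- the only atom of ν' within distance γ of s is s itself
  have hsep_s : ∀ t : ℝ, |t - s| < γ → ν' {t} ≠ 0 → t = s := by
    intro t ht hat
    by_contra hne
    exact absurd (hsep' t s hat hs hne) (not_le.2 ht)
  -- at most one atom of ν k in the ball of radius γ/2 around s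
  have huniq : ∀ k (t t' : ℝ), |t - s| < γ/2 → |t' - s| < γ/2 →
      ν k {t} ≠ 0 → ν k {t'} ≠ 0 → t = t' := by
    intro k t t' h1 h2 h3 h4
    by_contra hne
    have hsep := (hν k).2.2 t t' h3 h4 hne
    have habs : |t - t'| ≤ |t - s| + |t' - s| := by
      calc |t - t'| ≤ |t - s| + |s - t'| := abs_sub_le _ _ _
        _ = |t - s| + |t' - s| := by rw [abs_sub_comm s t']
    linarith
  -- choose sk
  obtain ⟨sk, hsk⟩ : ∃ sk : ℕ → ℝ, ∀ k,
      ((∃ t, |t - s| < γ/2 ∧ ν k {t} ≠ 0) → |sk k - s| < γ/2 ∧ ν k {sk k} ≠ 0) ∧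
      (¬ (∃ t, |t - s| < γ/2 ∧ ν k {t} ≠ 0) → sk k = s) := by
    refine ⟨fun k => if h : ∃ t, |t - s| < γ/2 ∧ ν k {t} ≠ 0 then h.choose else s,
      fun k => ⟨fun h => ?_, fun h => dif_neg h⟩⟩
    simp only [dif_pos h]
    exact h.choose_spec
  have hatom_eq : ∀ k (t : ℝ), |t - s| < γ/2 → ν k {t} ≠ 0 → t = sk k := by
    intro k t ht hat
    obtain ⟨h1, h2⟩ := (hsk k).1 ⟨t, ht, hat⟩
    exact huniq k t (sk k) ht h1 hat h2
  have hνksk0 : ∀ k, ¬ (∃ t, |t - s| < γ/2 ∧ ν k {t} ≠ 0) → ν k {sk k} = 0 := by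
    intro k h
    rw [(hsk k).2 h]
    by_contra hat
    exact h ⟨s, by rw [sub_self, abs_zero]; linarith, hat⟩
  -- bump functions
  have hfs1 : trap s 0 (γ/4) s = 1 :=
    trap_eq_one s 0 (γ/4) s (by linarith) (by rw [sub_self, abs_zero])
  have hgs1 : trap s (γ/2) (3*γ/4) s = 1 :=
    trap_eq_one s (γ/2) (3*γ/4) s (by linarith) (by rw [sub_self, abs_zero]; linarith)
  have hfν' : ∫ x, trap s 0 (γ/4) x ∂ν' = m := by
    rw [integral_eq_of_unique_atom ν' hconc' _ s
      (fun t hft hat => hsep_s t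
        (lt_trans (trap_lt_of_ne _ _ _ _ (by linarith) hft) (by linarith)) hat),
      hfs1, one_mul]
  have hgν' : ∫ x, trap s (γ/2) (3*γ/4) x ∂ν' = m := by
    rw [integral_eq_of_unique_atom ν' hconc' _ s
      (fun t hft hat => hsep_s t
        (lt_trans (trap_lt_of_ne _ _ _ _ (by linarith) hft) (by linarith)) hat),
      hgs1, one_mul]
  have hF : Tendsto (fun k => ∫ x, trap s 0 (γ/4) x ∂ν k) atTop (𝓝 m) := by
    have := hvague _ (trap_continuous s 0 (γ/4)) (trap_hasCompactSupport s 0 (γ/4) (by linarith))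
    rwa [hfν'] at this
  have hG : Tendsto (fun k => ∫ x, trap s (γ/2) (3*γ/4) x ∂ν k) atTop (𝓝 m) := by
    have := hvague _ (trap_continuous s (γ/2) (3*γ/4))
      (trap_hasCompactSupport s (γ/2) (3*γ/4) (by linarith))
    rwa [hgν'] at this
  have hlow : ∀ k, ∫ x, trap s 0 (γ/4) x ∂ν k ≤ (ν k {sk k}).toReal := by
    intro k
    have hpk : ∀ t : ℝ, trap s 0 (γ/4) t ≠ 0 → ν k {t} ≠ 0 → t = sk k := by
      intro t hft hat
      exact hatom_eq k t (lt_of_lt_of_le (trap_lt_of_ne _ _ _ _ (by linarith) hft)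
        (by linarith)) hat
    rw [integral_eq_of_unique_atom (ν k) (hν k).2.1 _ (sk k) hpk]
    exact mul_le_of_le_one_left ENNReal.toReal_nonneg (trap_le_one _ _ _ _)
  have hup : ∀ k, (ν k {sk k}).toReal ≤ ∫ x, trap s (γ/2) (3*γ/4) x ∂ν k := by
    intro k
    haveI := finiteOnCompacts_of_bound (ν k) C (hν k).1
    have hg_int : Integrable (trap s (γ/2) (3*γ/4)) (ν k) :=
      (trap_continuous _ _ _).integrable_of_hasCompactSupport
        (trap_hasCompactSupport _ _ _ (by linarith))
    by_cases h : ∃ t, |t - s| < γ/2 ∧ ν k {t} ≠ 0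
    · obtain ⟨h1, h2⟩ := (hsk k).1 h
      have hg1 : trap s (γ/2) (3*γ/4) (sk k) = 1 :=
        trap_eq_one _ _ _ _ (by linarith) h1.le
      have heq : (ν k {sk k}).toReal
          = ∫ x, Set.indicator {sk k} (trap s (γ/2) (3*γ/4)) x ∂ν k := by
        rw [integral_indicator (measurableSet_singleton _), Measure.restrict_singleton,
          integral_smul_measure, integral_dirac, hg1, smul_eq_mul, mul_one]
      rw [heq]
      exact integral_mono (hg_int.indicator (measurableSet_singleton _)) hg_int
        (Set.indicator_le_self' (fun x _ => trap_nonneg _ _ _ _))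
    · rw [hνksk0 k h, ENNReal.toReal_zero]
      exact integral_nonneg (fun x => trap_nonneg _ _ _ _)
  have hmain : Tendsto (fun k => (ν k {sk k}).toReal) atTop (𝓝 m) :=
    tendsto_of_tendsto_of_tendsto_of_le_of_le hF hG hlow hup
  refine ⟨sk, ?_, ?_⟩
  · rw [Metric.tendsto_nhds]
    intro ε hε
    have hε'0 : 0 < min ε (γ/4) := lt_min hε hγ4
    have hfε_int' : ∫ x, trap s 0 (min ε (γ/4)) x ∂ν' = m := by
      rw [integral_eq_of_unique_atom ν' hconc' _ s (fun t hft hat => hsep_s t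
          (lt_of_lt_of_le (trap_lt_of_ne _ _ _ _ hε'0 hft)
            (le_trans (min_le_right _ _) (by linarith))) hat),
        trap_eq_one s 0 (min ε (γ/4)) s hε'0 (by rw [sub_self, abs_zero]), one_mul]
    have hT := hvague _ (trap_continuous s 0 (min ε (γ/4)))
      (trap_hasCompactSupport s 0 (min ε (γ/4)) hε'0)
    rw [hfε_int'] at hT
    have hEv : ∀ᶠ k in atTop, m/2 < ∫ x, trap s 0 (min ε (γ/4)) x ∂ν k :=
      hT.eventually (eventually_gt_nhds (by linarith))
    filter_upwards [hEv] with k hk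
    have hex : ∃ t : ℝ, trap s 0 (min ε (γ/4)) t ≠ 0 ∧ ν k {t} ≠ 0 := by
      by_contra hno
      push_neg at hno
      have hae : trap s 0 (min ε (γ/4)) =ᵐ[ν k] (fun _ => (0:ℝ)) := by
        rw [Filter.EventuallyEq, ae_iff]
        refine measure_mono_null (fun x hx => ?_) (hν k).2.1
        simp only [mem_setOf_eq] at hx
        simp only [mem_compl_iff, mem_setOf_eq, not_not]
        exact hno x hx
      rw [integral_congr_ae hae, integral_zero] at hk
      linarith
    obtain ⟨t, hft, hat⟩ := hex
    have htb : |t - s| < min ε (γ/4) := trap_lt_of_ne _ _ _ _ hε'0 hft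
    have hts : t = sk k := hatom_eq k t
      (lt_of_lt_of_le htb (le_trans (min_le_right _ _) (by linarith))) hat
    rw [Real.dist_eq, ← hts]
    exact lt_of_lt_of_le htb (min_le_left _ _)
  · have hfun : (fun k => ν k {sk k}) = fun k => ENNReal.ofReal ((ν k {sk k}).toReal) := by
      funext k
      rw [ENNReal.ofReal_toReal (hfin (ν k) (hν k).1 (sk k))]
    rw [hfun, hν's]
    exact (ENNReal.continuous_ofReal.tendsto m).comp hmain

/-- convergence of atoms under vague convergence: if `ν_k → ν` vaguely in
`M_a^{C,γ}(ℝ)`, then for every atom `s` of `ν` there are reals `s_k → s` with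
`ν_k({s_k}) → ν({s})`. -/
theorem atoms_converge_of_vague
    (C γ : ℝ) (hC : 0 < C) (hγ : 0 < γ)
    (ν : ℕ → Measure ℝ) (ν' : Measure ℝ)
    (hν : ∀ k, MemMaClass C γ (ν k)) (hν' : MemMaClass C γ ν')
    (hvague : ∀ f : ℝ → ℝ, Continuous f → HasCompactSupport f →
        Filter.Tendsto (fun k => ∫ x, f x ∂(ν k)) Filter.atTop
          (nhds (∫ x, f x ∂ν'))) :
    ∀ s : ℝ, ν' {s} ≠ 0 →
      ∃ sk : ℕ → ℝ, Filter.Tendsto sk Filter.atTop (nhds s) ∧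
        Filter.Tendsto (fun k => ν k {sk k}) Filter.atTop (nhds (ν' {s})) := by
  exact atoms_converge_of_vague' C γ hC hγ ν ν' hν hν' hvague
end

section
/- Existence and uniqueness for the interface initial value problem: let μ = Σ_{n} β_n δ_{t_n} be an atomic measure on ℝ with strictly increasing atoms (t_n) whose consecutive gaps are at least γ > 0 and weights β_n = (√b_n + 1)/(√b_n − 1), b_n > 1. Let z ∈ ℂ, let a ∈ ℝ ∖ {t_n : n}, and let c₀, c₁ ∈ ℂ. Then there exists exactly one solution u of the interface equation −u'' = z u for μ on [a, ∞) with u(a) = c₀ and u'(a) = c₁. -/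
open Set Filter Topology MeasureTheory

/-!
Off the atoms, the state `(u, u')` solves the linear system `Y' = A Y` with
`A (y₁, y₂) = (y₂, -z y₁)`. On a gap `(p, q)` between consecutive atoms, `exp (-(x - p) A) Y(x)`
has zero derivative, so `Y` is `exp ((x - p) A)` applied to its right limit at `p`. The
interface conditions turn the left limit at an atom into the right limit there, so the
initial data `(c₀, c₁)` determine the data on every later gap; conversely, gluing these
exponentials gives a solution. The gap condition sends the atoms to infinity, so the gaps
exhaust `[a, ∞)`.
-/

namespace InterfaceIVP

open NormedSpace

lemma tendsto_nhdsLT_of_eqOn_Ioo {α X : Type*} [TopologicalSpace α] [LinearOrder α]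
    [OrderTopology α] [TopologicalSpace X] {f g : α → X} {p q : α}
    (hpq : p < q) (hfg : EqOn f g (Ioo p q)) (hg : ContinuousAt g q) :
    Tendsto f (𝓝[<] q) (𝓝 (g q)) :=
  (hg.tendsto.mono_left nhdsWithin_le_nhds).congr'
    (eventually_of_mem (Ioo_mem_nhdsLT hpq) fun _ hx => (hfg hx).symm)

lemma tendsto_nhdsGT_of_eqOn_Ioo {α X : Type*} [TopologicalSpace α] [LinearOrder α]
    [OrderTopology α] [TopologicalSpace X] {f g : α → X} {p q : α}
    (hpq : p < q) (hfg : EqOn f g (Ioo p q)) (hg : ContinuousAt g p) :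
    Tendsto f (𝓝[>] p) (𝓝 (g p)) :=
  (hg.tendsto.mono_left nhdsWithin_le_nhds).congr'
    (eventually_of_mem (Ioo_mem_nhdsGT hpq) fun _ hx => (hfg hx).symm)

lemma tendsto_atTop_of_le_sub {f : ℕ → ℝ} {γ : ℝ} (hγ : 0 < γ)
    (hgap : ∀ n, γ ≤ f (n + 1) - f n) : Tendsto f atTop atTop := by
  have hlin : ∀ n : ℕ, f 0 + n * γ ≤ f n := by
    intro n
    induction n with
    | zero => simp
    | succ n ih => push_cast; linarith [hgap n]
  exact tendsto_atTop_mono hlin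
    (tendsto_atTop_add_const_left _ _ (tendsto_natCast_atTop_atTop.atTop_mul_const hγ))

lemma exists_forall_lt_iff_le {α : Type*} [Preorder α] [NoMaxOrder α] {f : ℕ → α}
    (hf : Monotone f) (htop : Tendsto f atTop atTop) (a : α) : ∃ N, ∀ n, a < f n ↔ N ≤ n := by
  classical
  have hex : ∃ n, a < f n := (htop.eventually_gt_atTop a).exists
  exact ⟨Nat.find hex, fun n =>
    ⟨fun h => Nat.find_min' hex h, fun h => (Nat.find_spec hex).trans_le (hf h)⟩⟩

section LinearODE

variable {E : Type*} [NormedAddCommGroup E] [NormedSpace ℝ E] (A : E →L[ℝ] E)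

noncomputable def flow (s : ℝ) : E →L[ℝ] E := exp (s • A)

lemma flow_zero : flow A 0 = 1 := by simp [flow]

lemma contDiff_of_hasDerivAt_clm {Y : ℝ → E} (hY : ∀ x, HasDerivAt Y (A (Y x)) x) (n : ℕ) :
    ContDiff ℝ n Y := by
  have hdiff : Differentiable ℝ Y := fun x => (hY x).differentiableAt
  induction n with
  | zero => exact contDiff_zero.2 hdiff.continuous
  | succ n ih =>
    have hderiv : deriv Y = A ∘ Y := funext fun x => (hY x).deriv
    exact contDiff_succ_iff_deriv.2 ⟨hdiff, by simp, hderiv ▸ A.contDiff.comp ih⟩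

variable [CompleteSpace E]

lemma flow_add (s r : ℝ) : flow A (s + r) = flow A s * flow A r := by
  let +nondep : NormedAlgebra ℚ (E →L[ℝ] E) := .restrictScalars ℚ ℝ _
  rw [flow, add_smul, exp_add_of_commute (((Commute.refl A).smul_left s).smul_right r)]
  rfl

lemma hasDerivAt_flow (s : ℝ) : HasDerivAt (flow A) (flow A s * A) s :=
  hasDerivAt_exp_smul_const A s

lemma hasDerivAt_flow_apply (p : ℝ) (d : E) (x : ℝ) :
    HasDerivAt (fun y => flow A (y - p) d) (A (flow A (x - p) d)) x := by
  have h := ((hasDerivAt_exp_smul_const' (𝕂 := ℝ) A (x - p)).comp_sub_const x p).clm_apply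
    (hasDerivAt_const x d)
  simpa [flow] using h

lemma continuous_flow_apply (p : ℝ) (d : E) : Continuous fun y => flow A (y - p) d :=
  continuous_iff_continuousAt.2 fun x => (hasDerivAt_flow_apply A p d x).continuousAt

lemma eqOn_flow_of_hasDerivAt {Y : ℝ → E} {p q : ℝ} {d : E} (hpq : p < q)
    (hY : ∀ x ∈ Ioo p q, HasDerivAt Y (A (Y x)) x) (hlim : Tendsto Y (𝓝[>] p) (𝓝 d)) :
    EqOn Y (fun x => flow A (x - p) d) (Ioo p q) := by
  set G : ℝ → E := fun x => flow A (p - x) (Y x)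
  have hG : ∀ x ∈ Ioo p q, HasDerivAt G 0 x := by
    intro x hx
    have hflow : HasDerivAt (fun x => flow A (p - x)) (-(flow A (p - x) * A)) x := by
      simpa [Function.comp_def] using
        (hasDerivAt_flow A (p - x)).scomp x ((hasDerivAt_id x).const_sub p)
    simpa using hflow.clm_apply (hY x hx)
  obtain ⟨c, hc⟩ := isOpen_Ioo.exists_is_const_of_deriv_eq_zero isPreconnected_Ioo
    (fun x hx => (hG x hx).differentiableAt.differentiableWithinAt)
    (fun x hx => (hG x hx).deriv)
  have hGlim : Tendsto G (𝓝[>] p) (𝓝 d) := by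
    have hflow : Tendsto (fun x => flow A (p - x)) (𝓝[>] p) (𝓝 1) := by
      have : ContinuousAt (fun x => flow A (p - x)) p :=
        (hasDerivAt_flow A _).continuousAt.comp (f := fun x => p - x)
          (by fun_prop : Continuous fun x : ℝ => p - x).continuousAt
      simpa [flow_zero] using this.tendsto.mono_left nhdsWithin_le_nhds
    exact ((isBoundedBilinearMap_apply (𝕜 := ℝ) (E := E) (F := E)).continuous.tendsto
      (1, d)).comp (hflow.prodMk_nhds hlim)
  have hcd : c = d := tendsto_nhds_unique
    (tendsto_const_nhds.congr' (eventually_of_mem (Ioo_mem_nhdsGT hpq) fun x hx => (hc x hx).symm))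
    hGlim
  intro x hx
  have hinv : flow A (x - p) * flow A (p - x) = 1 := by rw [← flow_add]; simp [flow_zero]
  calc Y x = (flow A (x - p) * flow A (p - x)) (Y x) := by rw [hinv]; rfl
    _ = flow A (x - p) d := by rw [← hcd, ← hc x hx]; rfl

end LinearODE

section FirstOrderSystem

/-- The equation `-u'' = z u` as the first-order system `(u, u')' = odeSystem z (u, u')`. -/
noncomputable def odeSystem (z : ℂ) : ℂ × ℂ →L[ℝ] ℂ × ℂ :=
  (ContinuousLinearMap.snd ℝ ℂ ℂ).prod (-z • ContinuousLinearMap.fst ℝ ℂ ℂ)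

@[simp]
lemma odeSystem_apply (z : ℂ) (y : ℂ × ℂ) : odeSystem z y = (y.2, -z * y.1) := by
  simp [odeSystem]

noncomputable def state (S : Set ℝ) (u : ℝ → ℂ) (x : ℝ) : ℂ × ℂ := (u x, derivWithin u S x)

variable {S : Set ℝ} {z : ℂ}

lemma hasDerivWithinAt_state (hS : UniqueDiffOn ℝ S) {u : ℝ → ℂ} (hu : ContDiffOn ℝ 2 u S)
    (heq : ∀ x ∈ S, -derivWithin (derivWithin u S) S x = z * u x) {x : ℝ} (hx : x ∈ S) :
    HasDerivWithinAt (state S u) (odeSystem z (state S u x)) S x := by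
  have hu' : ContDiffOn ℝ 1 (derivWithin u S) S := hu.derivWithin hS (by norm_num)
  have hu'' : HasDerivWithinAt (derivWithin u S) (-z * u x) S x := by
    have h := (hu'.differentiableOn one_ne_zero x hx).hasDerivWithinAt
    rwa [neg_mul, ← heq x hx, neg_neg]
  exact (((hu.differentiableOn (by norm_num) x hx).hasDerivWithinAt).prodMk hu'').congr_deriv
    (by simp [state])

section Gluing

variable {Y : ℝ → ℂ × ℂ}
  (hloc : ∀ x ∈ S, ∃ F : ℝ → ℂ × ℂ, (∀ y, HasDerivAt F (odeSystem z (F y)) y) ∧ Y =ᶠ[𝓝[S] x] F)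
include hloc

lemma contDiffOn_fst_of_locally : ContDiffOn ℝ 2 (fun x => (Y x).1) S := by
  intro x hx
  obtain ⟨F, hF, hYF⟩ := hloc x hx
  exact ((contDiff_of_hasDerivAt_clm _ hF 2).fst.contDiffWithinAt).congr_of_eventuallyEq
    (hYF.fun_comp Prod.fst) (congrArg Prod.fst (hYF.eq_of_nhdsWithin hx))

lemma eqOn_derivWithin_fst_of_locally (hS : UniqueDiffOn ℝ S) :
    EqOn (derivWithin (fun x => (Y x).1) S) (fun x => (Y x).2) S := by
  intro x hx
  obtain ⟨F, hF, hYF⟩ := hloc x hx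
  have hFx : Y x = F x := hYF.eq_of_nhdsWithin hx
  have hfst : (fun x => (Y x).1) =ᶠ[𝓝[S] x] fun x => (F x).1 := hYF.fun_comp Prod.fst
  have hF₁ : HasDerivAt (fun y => (F y).1) (F x).2 x := by
    simpa [Function.comp_def] using
      (ContinuousLinearMap.fst ℝ ℂ ℂ).hasFDerivAt.comp_hasDerivAt x (hF x)
  rw [hfst.derivWithin_eq (congrArg Prod.fst hFx), hF₁.hasDerivWithinAt.derivWithin (hS x hx)]
  exact congrArg Prod.snd hFx.symm

lemma neg_derivWithin_derivWithin_fst_of_locally (hS : UniqueDiffOn ℝ S) {x : ℝ} (hx : x ∈ S) :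
    -derivWithin (derivWithin (fun x => (Y x).1) S) S x = z * (Y x).1 := by
  obtain ⟨F, hF, hYF⟩ := hloc x hx
  have hFx : Y x = F x := hYF.eq_of_nhdsWithin hx
  have hF₂ : HasDerivAt (fun y => (F y).2) (-z * (F x).1) x := by
    simpa [Function.comp_def] using
      (ContinuousLinearMap.snd ℝ ℂ ℂ).hasFDerivAt.comp_hasDerivAt x (hF x)
  have hsnd : (fun x => (Y x).2) =ᶠ[𝓝[S] x] fun x => (F x).2 := hYF.fun_comp Prod.snd
  rw [derivWithin_congr (eqOn_derivWithin_fst_of_locally hloc hS)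
      (eqOn_derivWithin_fst_of_locally hloc hS hx),
    hsnd.derivWithin_eq (congrArg Prod.snd hFx), hF₂.hasDerivWithinAt.derivWithin (hS x hx), hFx]
  ring

end Gluing

end FirstOrderSystem

section Interface

noncomputable def jump (b : ℝ) (y : ℂ × ℂ) : ℂ × ℂ :=
  ((Real.sqrt b : ℂ) * y.1, y.2 / (Real.sqrt b : ℂ))

variable {ts bs : ℕ → ℝ} {S : Set ℝ} {u : ℝ → ℂ} {n : ℕ}

lemma interfaceAt_of_tendsto {L : ℂ × ℂ}
    (hL : Tendsto (state S u) (𝓝[S ∩ Iio (ts n)] (ts n)) (𝓝 L))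
    (hR : Tendsto (state S u) (𝓝[S ∩ Ioi (ts n)] (ts n)) (𝓝 (jump (bs n) L))) :
    InterfaceAt ts bs S u n :=
  ⟨L.1, _, L.2, _, hL.fst_nhds, hR.fst_nhds, hL.snd_nhds, hR.snd_nhds, rfl, rfl⟩

lemma InterfaceAt.tendsto_right (h : InterfaceAt ts bs S u n)
    [(𝓝[S ∩ Iio (ts n)] (ts n)).NeBot] {L : ℂ × ℂ}
    (hL : Tendsto (state S u) (𝓝[S ∩ Iio (ts n)] (ts n)) (𝓝 L)) :
    Tendsto (state S u) (𝓝[S ∩ Ioi (ts n)] (ts n)) (𝓝 (jump (bs n) L)) := by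
  obtain ⟨uL, uR, duL, duR, huL, huR, hduL, hduR, rfl, rfl⟩ := h
  obtain rfl : uL = L.1 := tendsto_nhds_unique huL hL.fst_nhds
  obtain rfl : duL = L.2 := tendsto_nhds_unique hduL hL.snd_nhds
  exact huR.prodMk_nhds hduR

end Interface

section Cells

variable (t : ℕ → ℝ) (a : ℝ)

/- For atoms `a < t 0 < t 1 < ⋯`, cell `k` is `[cellStart t a k, t k)`, i.e. `[a, t 0)` and then
`[t k, t (k + 1))`; `cell t x` is the cell containing `x ≥ a`. -/
def cellStart : ℕ → ℝ
  | 0 => a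
  | k + 1 => t k

noncomputable def cell (x : ℝ) : ℕ := sInf {k | x < t k}

variable {t a}

lemma mem_Ico_cell (htop : Tendsto t atTop atTop) {x : ℝ} (hx : a ≤ x) :
    x ∈ Ico (cellStart t a (cell t x)) (t (cell t x)) := by
  have hne : {k | x < t k}.Nonempty := (htop.eventually_gt_atTop x).exists
  refine ⟨?_, Nat.sInf_mem hne⟩
  rcases hk : cell t x with _ | k
  · exact hx
  · exact not_lt.1 (Nat.notMem_of_lt_sInf (hk ▸ k.lt_succ_self : k < cell t x))

lemma eq_or_mem_Ioo_cell (htop : Tendsto t atTop atTop) {x : ℝ} (hx : x ∈ offAtoms t (Ici a)) :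
    x = a ∨ x ∈ Ioo (cellStart t a (cell t x)) (t (cell t x)) := by
  obtain ⟨hx₁, hx₂⟩ := mem_Ico_cell htop hx.1
  rcases hx₁.eq_or_lt with h | h
  · left
    rcases hk : cell t x with _ | k
    · rw [hk] at h; exact h.symm
    · rw [hk] at h; exact absurd ⟨k, h⟩ hx.2
  · exact Or.inr ⟨h, hx₂⟩

variable (ht : StrictMono t)
include ht

lemma le_cellStart_of_lt {j k : ℕ} (hjk : j < k) : t j ≤ cellStart t a k := by
  cases k with
  | zero => exact absurd hjk (Nat.not_lt_zero j)
  | succ k => exact ht.monotone (Nat.lt_succ_iff.1 hjk)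

lemma cell_eq_of_mem_Ico {k : ℕ} {x : ℝ} (hx : x ∈ Ico (cellStart t a k) (t k)) :
    cell t x = k := by
  refine le_antisymm (Nat.sInf_le hx.2) (not_lt.1 fun hlt => ?_)
  have hmem : x < t (cell t x) := Nat.sInf_mem (s := {k | x < t k}) ⟨k, hx.2⟩
  exact (le_cellStart_of_lt ht hlt).not_gt (hx.1.trans_lt hmem)

variable (hat : a < t 0)
include hat

lemma cellStart_lt (k : ℕ) : cellStart t a k < t k := by
  cases k with
  | zero => exact hat
  | succ k => exact ht k.lt_succ_self

lemma self_le_cellStart (k : ℕ) : a ≤ cellStart t a k := by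
  cases k with
  | zero => exact le_rfl
  | succ k => exact hat.le.trans (ht.monotone k.zero_le)

lemma Ioo_subset_offAtoms (k : ℕ) : Ioo (cellStart t a k) (t k) ⊆ offAtoms t (Ici a) := by
  rintro x ⟨hx₁, hx₂⟩
  refine ⟨(self_le_cellStart ht hat k).trans hx₁.le, ?_⟩
  rintro ⟨j, rfl⟩
  rcases lt_or_ge j k with hjk | hkj
  · exact (le_cellStart_of_lt ht hjk).not_gt hx₁
  · exact (ht.monotone hkj).not_gt hx₂

lemma offAtoms_mem_nhdsLT (k : ℕ) : offAtoms t (Ici a) ∈ 𝓝[<] (t k) :=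
  mem_of_superset (Ioo_mem_nhdsLT (cellStart_lt ht hat k)) (Ioo_subset_offAtoms ht hat k)

lemma offAtoms_mem_nhdsGT (k : ℕ) : offAtoms t (Ici a) ∈ 𝓝[>] (cellStart t a k) :=
  mem_of_superset (Ioo_mem_nhdsGT (cellStart_lt ht hat k)) (Ioo_subset_offAtoms ht hat k)

lemma mem_offAtoms_self : a ∈ offAtoms t (Ici a) := by
  refine ⟨self_mem_Ici, ?_⟩
  rintro ⟨j, hj⟩
  exact (hat.trans_le (ht.monotone j.zero_le)).ne' hj

lemma cell_self : cell t a = 0 := cell_eq_of_mem_Ico ht ⟨le_rfl, hat⟩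

variable (htop : Tendsto t atTop atTop)
include htop

lemma uniqueDiffOn_offAtoms : UniqueDiffOn ℝ (offAtoms t (Ici a)) := by
  intro x hx
  rcases eq_or_mem_Ioo_cell htop hx with rfl | hx'
  · refine (uniqueDiffOn_Ico x (t 0) x ⟨le_rfl, hat⟩).mono ?_
    rintro y ⟨hy₁, hy₂⟩
    rcases hy₁.eq_or_lt with rfl | hy₁
    · exact mem_offAtoms_self ht hat
    · exact Ioo_subset_offAtoms ht hat 0 ⟨hy₁, hy₂⟩
  · exact uniqueDiffWithinAt_of_mem_nhds
      (mem_of_superset (isOpen_Ioo.mem_nhds hx') (Ioo_subset_offAtoms ht hat _))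

lemma Ico_cell_mem_nhdsWithin {x : ℝ} (hx : x ∈ offAtoms t (Ici a)) :
    Ico (cellStart t a (cell t x)) (t (cell t x)) ∈ 𝓝[offAtoms t (Ici a)] x := by
  rcases eq_or_mem_Ioo_cell htop hx with rfl | hx'
  · rw [cell_self ht hat]
    exact mem_nhdsWithin.2 ⟨Iio (t 0), isOpen_Iio, hat, fun y hy => ⟨hy.2.1, hy.1⟩⟩
  · exact mem_nhdsWithin_of_mem_nhds
      (mem_of_superset (isOpen_Ioo.mem_nhds hx') Ioo_subset_Ico_self)

end Cells

section Construction

variable (t b : ℕ → ℝ) (a : ℝ) (z : ℂ) (c : ℂ × ℂ)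

noncomputable def cellData : ℕ → ℂ × ℂ
  | 0 => c
  | k + 1 => jump (b k) (flow (odeSystem z) (t k - cellStart t a k) (cellData k))

noncomputable def cellSolution (k : ℕ) (x : ℝ) : ℂ × ℂ :=
  flow (odeSystem z) (x - cellStart t a k) (cellData t b a z c k)

noncomputable def gluedSolution (x : ℝ) : ℂ × ℂ := cellSolution t b a z c (cell t x) x

lemma cellSolution_cellStart (k : ℕ) :
    cellSolution t b a z c k (cellStart t a k) = cellData t b a z c k := by
  simp [cellSolution, flow_zero]

lemma hasDerivAt_cellSolution (k : ℕ) (x : ℝ) :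
    HasDerivAt (cellSolution t b a z c k) (odeSystem z (cellSolution t b a z c k x)) x :=
  hasDerivAt_flow_apply _ _ _ x

lemma continuous_cellSolution (k : ℕ) : Continuous (cellSolution t b a z c k) :=
  continuous_flow_apply _ _ _

variable {t a} (ht : StrictMono t) (hat : a < t 0)
include ht hat

lemma gluedSolution_self : gluedSolution t b a z c a = c := by
  rw [gluedSolution, cell_self ht hat]
  exact cellSolution_cellStart t b a z c 0

variable (htop : Tendsto t atTop atTop)
include htop

theorem exists_isInterfaceSolution :
    ∃ u, IsInterfaceSolution t b z (Ici a) u ∧ state (offAtoms t (Ici a)) u a = c := by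
  set S := offAtoms t (Ici a)
  set Y := gluedSolution t b a z c
  have hS : UniqueDiffOn ℝ S := uniqueDiffOn_offAtoms ht hat htop
  have hcell : ∀ k, EqOn Y (cellSolution t b a z c k) (Ico (cellStart t a k) (t k)) :=
    fun k x hx => by simp only [Y, gluedSolution, cell_eq_of_mem_Ico ht hx]
  have hloc : ∀ x ∈ S, ∃ F : ℝ → ℂ × ℂ,
      (∀ y, HasDerivAt F (odeSystem z (F y)) y) ∧ Y =ᶠ[𝓝[S] x] F :=
    fun x hx => ⟨_, hasDerivAt_cellSolution t b a z c _,
      eventually_of_mem (Ico_cell_mem_nhdsWithin ht hat htop hx) (hcell _)⟩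
  have hstate : EqOn (state S fun x => (Y x).1) Y S := fun x hx =>
    Prod.ext rfl (eqOn_derivWithin_fst_of_locally hloc hS hx)
  have hcellS : ∀ k, EqOn (state S fun x => (Y x).1) (cellSolution t b a z c k)
      (Ioo (cellStart t a k) (t k)) := fun k x hx =>
    (hstate (Ioo_subset_offAtoms ht hat k hx)).trans (hcell k (Ioo_subset_Ico_self hx))
  refine ⟨fun x => (Y x).1, ⟨contDiffOn_fst_of_locally hloc,
    fun x hx => neg_derivWithin_derivWithin_fst_of_locally hloc hS hx,
    fun k _ => interfaceAt_of_tendsto (L := cellSolution t b a z c k (t k)) ?_ ?_⟩, ?_⟩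
  · rw [nhdsWithin_inter_of_mem (offAtoms_mem_nhdsLT ht hat k)]
    exact tendsto_nhdsLT_of_eqOn_Ioo (cellStart_lt ht hat k) (hcellS k)
      (continuous_cellSolution t b a z c k).continuousAt
  · have hS_gt : S ∈ 𝓝[>] (t k) := offAtoms_mem_nhdsGT ht hat (k + 1)
    rw [nhdsWithin_inter_of_mem hS_gt]
    have h := tendsto_nhdsGT_of_eqOn_Ioo (cellStart_lt ht hat (k + 1)) (hcellS (k + 1))
      (continuous_cellSolution t b a z c (k + 1)).continuousAt
    rwa [cellSolution_cellStart] at h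
  · exact (hstate (mem_offAtoms_self ht hat)).trans (gluedSolution_self b z c ht hat)

theorem eqOn_gluedSolution_of_isInterfaceSolution {u : ℝ → ℂ}
    (hu : IsInterfaceSolution t b z (Ici a) u) (hua : state (offAtoms t (Ici a)) u a = c) :
    EqOn (state (offAtoms t (Ici a)) u) (gluedSolution t b a z c) (offAtoms t (Ici a)) := by
  set S := offAtoms t (Ici a)
  obtain ⟨hu₂, hueq, hjump⟩ := hu
  have hS : UniqueDiffOn ℝ S := uniqueDiffOn_offAtoms ht hat htop
  have hderiv : ∀ k, ∀ x ∈ Ioo (cellStart t a k) (t k),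
      HasDerivAt (state S u) (odeSystem z (state S u x)) x := fun k x hx =>
    (hasDerivWithinAt_state hS hu₂ hueq (Ioo_subset_offAtoms ht hat k hx)).hasDerivAt
      (mem_of_superset (isOpen_Ioo.mem_nhds hx) (Ioo_subset_offAtoms ht hat k))
  have hcell : ∀ k,
      EqOn (state S u) (cellSolution t b a z c k) (Ioo (cellStart t a k) (t k)) := by
    intro k
    refine eqOn_flow_of_hasDerivAt _ (cellStart_lt ht hat k) (hderiv k) ?_
    induction k with
    | zero =>
      rw [cellData, ← hua]
      exact ((hasDerivWithinAt_state hS hu₂ hueq (mem_offAtoms_self ht hat)).continuousWithinAt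
        ).tendsto.mono_left (nhdsWithin_le_of_mem (offAtoms_mem_nhdsGT ht hat 0))
    | succ k ih =>
      have hL : Tendsto (state S u) (𝓝[S ∩ Iio (t k)] (t k))
          (𝓝 (cellSolution t b a z c k (t k))) := by
        rw [nhdsWithin_inter_of_mem (offAtoms_mem_nhdsLT ht hat k)]
        exact tendsto_nhdsLT_of_eqOn_Ioo (cellStart_lt ht hat k)
          (eqOn_flow_of_hasDerivAt _ (cellStart_lt ht hat k) (hderiv k) ih)
          (continuous_cellSolution t b a z c k).continuousAt
      have : (𝓝[S ∩ Iio (t k)] (t k)).NeBot := by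
        rw [nhdsWithin_inter_of_mem (offAtoms_mem_nhdsLT ht hat k)]; infer_instance
      have hR := InterfaceAt.tendsto_right
        (hjump k (by rw [interior_Ici]; exact hat.trans_le (ht.monotone k.zero_le))) hL
      have hS_gt : S ∈ 𝓝[>] (t k) := offAtoms_mem_nhdsGT ht hat (k + 1)
      rwa [nhdsWithin_inter_of_mem hS_gt] at hR
  intro x hx
  rcases eq_or_mem_Ioo_cell htop hx with hxa | hx'
  · rw [hxa, hua, gluedSolution_self b z c ht hat]
  · exact hcell _ hx'

end Construction

section Reindexing

variable {ts bs : ℕ → ℝ} {a : ℝ} {N : ℕ} (hN : ∀ n, a < ts n ↔ N ≤ n)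
include hN

lemma offAtoms_Ici_eq_shift (ha : a ∉ range ts) :
    offAtoms ts (Ici a) = offAtoms (fun k => ts (N + k)) (Ici a) := by
  ext x
  refine ⟨fun ⟨hx, hxr⟩ => ⟨hx, fun ⟨k, hk⟩ => hxr ⟨N + k, hk⟩⟩, fun ⟨hx, hxr⟩ => ⟨hx, ?_⟩⟩
  rintro ⟨n, rfl⟩
  have hN_le : N ≤ n := (hN n).1 (lt_of_le_of_ne hx fun h => ha ⟨n, h.symm⟩)
  obtain ⟨k, rfl⟩ := Nat.exists_eq_add_of_le hN_le
  exact hxr ⟨k, rfl⟩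

lemma isInterfaceSolution_iff_shift (ha : a ∉ range ts) {z : ℂ} {u : ℝ → ℂ} :
    IsInterfaceSolution ts bs z (Ici a) u ↔
      IsInterfaceSolution (fun k => ts (N + k)) (fun k => bs (N + k)) z (Ici a) u := by
  simp only [IsInterfaceSolution, ← offAtoms_Ici_eq_shift hN ha, interior_Ici, mem_Ioi]
  refine and_congr_right' (and_congr_right' ⟨fun h k hk => h (N + k) hk, fun h n hn => ?_⟩)
  obtain ⟨k, rfl⟩ := Nat.exists_eq_add_of_le ((hN n).1 hn)
  exact h k hn

end Reindexing

end InterfaceIVP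

open InterfaceIVP

theorem interface_ivp_exists_unique_general
    (ts bs : ℕ → ℝ) (γ : ℝ) (hγ : 0 < γ)
    (ht_mono : StrictMono ts) (hgap : ∀ n, γ ≤ ts (n + 1) - ts n)
    (z : ℂ) (a : ℝ) (ha : a ∉ Set.range ts) (c₀ c₁ : ℂ) :
    (∃ u : ℝ → ℂ, IsInterfaceSolution ts bs z (Ici a) u ∧
        u a = c₀ ∧ derivWithin u (offAtoms ts (Ici a)) a = c₁) ∧
    (∀ u v : ℝ → ℂ,
        (IsInterfaceSolution ts bs z (Ici a) u ∧
          u a = c₀ ∧ derivWithin u (offAtoms ts (Ici a)) a = c₁) →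
        (IsInterfaceSolution ts bs z (Ici a) v ∧
          v a = c₀ ∧ derivWithin v (offAtoms ts (Ici a)) a = c₁) →
        Set.EqOn u v (offAtoms ts (Ici a))) := by
  have htop := tendsto_atTop_of_le_sub hγ hgap
  obtain ⟨N, hN⟩ := exists_forall_lt_iff_le ht_mono.monotone htop a
  have hshift : StrictMono (N + ·) := strictMono_id.const_add N
  have ht : StrictMono fun k => ts (N + k) := ht_mono.comp hshift
  have htop' : Tendsto (fun k => ts (N + k)) atTop atTop := htop.comp hshift.tendsto_atTop
  have hat : a < ts (N + 0) := (hN _).2 (Nat.le_add_right N 0)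
  simp only [isInterfaceSolution_iff_shift hN ha, offAtoms_Ici_eq_shift hN ha]
  refine ⟨?_, fun u v ⟨hu, hu₀, hu₁⟩ ⟨hv, hv₀, hv₁⟩ x hx => ?_⟩
  · obtain ⟨u, hu, hua⟩ := exists_isInterfaceSolution _ z (c₀, c₁) ht hat htop'
    exact ⟨u, hu, congrArg Prod.fst hua, congrArg Prod.snd hua⟩
  · have hu_eq := eqOn_gluedSolution_of_isInterfaceSolution _ z (c₀, c₁) ht hat htop' hu
      (Prod.ext hu₀ hu₁) hx
    have hv_eq := eqOn_gluedSolution_of_isInterfaceSolution _ z (c₀, c₁) ht hat htop' hv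
      (Prod.ext hv₀ hv₁) hx
    exact congrArg Prod.fst (hu_eq.trans hv_eq.symm)

/-- existence and uniqueness for the interface initial value problem:
for any `z ∈ ℂ`, `a ∉ {tₙ}` and `c₀, c₁ ∈ ℂ` there is exactly one solution `u` of the
interface equation `-u'' = z u` on `[a, ∞)` with `u(a) = c₀`, `u'(a) = c₁` (uniqueness
holds off the atoms, where the equation constrains `u`). -/
theorem interface_ivp_exists_unique
    (ts bs : ℕ → ℝ) (γ : ℝ) (hγ : 0 < γ)
    (ht_mono : StrictMono ts) (hgap : ∀ n, γ ≤ ts (n + 1) - ts n)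
    (hbs : ∀ n, 1 < bs n)
    (z : ℂ) (a : ℝ) (ha : a ∉ Set.range ts) (c₀ c₁ : ℂ) :
    (∃ u : ℝ → ℂ, IsInterfaceSolution ts bs z (Ici a) u ∧
        u a = c₀ ∧ derivWithin u (offAtoms ts (Ici a)) a = c₁) ∧
    (∀ u v : ℝ → ℂ,
        (IsInterfaceSolution ts bs z (Ici a) u ∧
          u a = c₀ ∧ derivWithin u (offAtoms ts (Ici a)) a = c₁) →
        (IsInterfaceSolution ts bs z (Ici a) v ∧
          v a = c₀ ∧ derivWithin v (offAtoms ts (Ici a)) a = c₁) →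
        Set.EqOn u v (offAtoms ts (Ici a))) :=
  interface_ivp_exists_unique_general ts bs γ hγ ht_mono hgap z a ha c₀ c₁
end
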